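/- arXiv:2508.21502 — 8 statements merged into one kernel-verified Lean document; each statement's English description precedes it below -/
import Mathlib

section
/- For all real numbers t, m and all k = (k₁,k₂) ∈ ℝ², the 4×4 π-flux Bloch Hamiltonian h(t,m,k) is Hermitian and satisfies h(t,m,k) * h(t,m,k) = (m² + 4t² + 2t²·cos(2k₁) + 2t²·cos(2k₂)) · I₄, where I₄ is the 4×4 identity matrix. -/
open Complex

/-- The 4×4 π-flux Bloch Hamiltonian with hopping `t`, staggered mass `m`,
at quasi-momentum `k = (k₁, k₂)`. -/
noncomputable def blochH (t m k₁ k₂ : ℝ) : Matrix (Fin 4) (Fin 4) ℂ :=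
  !![(m : ℂ), -t * (1 + exp (2 * I * k₂)), 0, t * (1 + exp (-2 * I * k₁));
     -t * (1 + exp (-2 * I * k₂)), -m, -t * (1 + exp (-2 * I * k₁)), 0;
     0, -t * (1 + exp (2 * I * k₁)), m, -t * (1 + exp (-2 * I * k₂));
     t * (1 + exp (2 * I * k₁)), 0, -t * (1 + exp (2 * I * k₂)), -m]

lemma conj_arg_aux (x : ℝ) : (starRingEnd ℂ) (I * x * 2) = -(I * x * 2) := by
  simp only [map_mul, Complex.conj_I, Complex.conj_ofReal, map_ofNat]
  ring

lemma conj_exp_aux (x : ℝ) :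
    (starRingEnd ℂ) (exp (I * x * 2)) = exp (-(I * x * 2)) := by
  rw [← Complex.exp_conj, conj_arg_aux]

lemma conj_exp_aux' (x : ℝ) :
    (starRingEnd ℂ) (exp (-(I * x * 2))) = exp (I * x * 2) := by
  rw [← Complex.exp_conj, map_neg, conj_arg_aux, neg_neg]

lemma exp_mul_exp_aux (x : ℝ) : exp (I * x * 2) * exp (-(I * x * 2)) = 1 := by
  rw [← Complex.exp_add]
  ring_nf
  exact Complex.exp_zero

lemma exp_add_exp_aux (x : ℝ) :
    exp (I * x * 2) + exp (-(I * x * 2)) = 2 * Complex.cos ((x : ℂ) * 2) := by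
  rw [show (I * (x:ℂ) * 2) = ((x:ℂ) * 2) * I from by ring]
  rw [show (-((x:ℂ) * 2 * I)) = (-((x:ℂ) * 2)) * I from by ring]
  rw [Complex.exp_mul_I, Complex.exp_mul_I, Complex.cos_neg, Complex.sin_neg]
  ring

/-- The π-flux Bloch Hamiltonian is Hermitian and its square is the scalar matrix
`(m² + 4t² + 2t²cos(2k₁) + 2t²cos(2k₂)) · 1`. -/
theorem blochH_isHermitian_and_sq (t m k₁ k₂ : ℝ) :
    (blochH t m k₁ k₂).IsHermitian ∧
      blochH t m k₁ k₂ * blochH t m k₁ k₂ =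
        ((m ^ 2 + 4 * t ^ 2 + 2 * t ^ 2 * Real.cos (2 * k₁)
          + 2 * t ^ 2 * Real.cos (2 * k₂) : ℝ) : ℂ) • (1 : Matrix (Fin 4) (Fin 4) ℂ) := by
  constructor
  · ext i j
    fin_cases i <;> fin_cases j <;>
      simp [blochH, Matrix.conjTranspose_apply] <;> ring_nf <;>
      simp [conj_exp_aux, conj_exp_aux']
  · have h1 := exp_mul_exp_aux k₁
    have h2 := exp_mul_exp_aux k₂
    have h3 := exp_add_exp_aux k₁
    have h4 := exp_add_exp_aux k₂
    ext i j
    fin_cases i <;> fin_cases j <;>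
      simp [blochH, Matrix.mul_apply, Fin.sum_univ_succ, Matrix.one_apply] <;>
      ring_nf <;>
      linear_combination (t:ℂ)^2 * h1 + (t:ℂ)^2 * h2 + (t:ℂ)^2 * h3 + (t:ℂ)^2 * h4
end

section
/- For all real numbers t, m and all k = (k₁,k₂) ∈ ℝ², the characteristic polynomial of the 4×4 π-flux Bloch Hamiltonian h(t,m,k) equals (X² − (m² + 4t² + 2t²·cos(2k₁) + 2t²·cos(2k₂)))² in ℂ[X]; in particular the eigenvalues of h(t,m,k) are e₊(k) = √(m² + 4t² + 2t²·cos(2k₁) + 2t²·cos(2k₂)) and e₋(k) = −e₊(k), each with multiplicity two. -/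
open Complex Polynomial


lemma det4 {R : Type*} [CommRing R] (x m a a' b b' : R) :
    Matrix.det !![x - m, b, 0, -a'; b', x + m, a', 0; 0, a, x - m, b'; -a, 0, b, x + m]
      = (x ^ 2 - m ^ 2 - a * a' - b * b') ^ 2 := by
  simp [Matrix.det_succ_row_zero, Fin.sum_univ_succ, Fin.succAbove]
  ring

lemma expcos (k : ℝ) : exp (2 * I * k) + exp (-2 * I * k) = 2 * (Real.cos (2 * k) : ℂ) := by
  rw [Complex.ofReal_cos]
  push_cast
  rw [Complex.cos]
  ring_nf

/-- The characteristic polynomial of the π-flux Bloch Hamiltonian is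
`(X² − (m² + 4t² + 2t²cos(2k₁) + 2t²cos(2k₂)))²`; in particular its eigenvalues are
`±√(m² + 4t² + 2t²cos(2k₁) + 2t²cos(2k₂))`, each with multiplicity two. -/
theorem blochH_charpoly (t m k₁ k₂ : ℝ) :
    (blochH t m k₁ k₂).charpoly =
      (X ^ 2 - C ((m ^ 2 + 4 * t ^ 2 + 2 * t ^ 2 * Real.cos (2 * k₁)
        + 2 * t ^ 2 * Real.cos (2 * k₂) : ℝ) : ℂ)) ^ 2 ∧
    (blochH t m k₁ k₂).charpoly.roots =
      {((Real.sqrt (m ^ 2 + 4 * t ^ 2 + 2 * t ^ 2 * Real.cos (2 * k₁)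
          + 2 * t ^ 2 * Real.cos (2 * k₂)) : ℝ) : ℂ),
       ((Real.sqrt (m ^ 2 + 4 * t ^ 2 + 2 * t ^ 2 * Real.cos (2 * k₁)
          + 2 * t ^ 2 * Real.cos (2 * k₂)) : ℝ) : ℂ),
       (-(Real.sqrt (m ^ 2 + 4 * t ^ 2 + 2 * t ^ 2 * Real.cos (2 * k₁)
          + 2 * t ^ 2 * Real.cos (2 * k₂)) : ℝ) : ℂ),
       (-(Real.sqrt (m ^ 2 + 4 * t ^ 2 + 2 * t ^ 2 * Real.cos (2 * k₁)
          + 2 * t ^ 2 * Real.cos (2 * k₂)) : ℝ) : ℂ)} := by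
  set E : ℝ := m ^ 2 + 4 * t ^ 2 + 2 * t ^ 2 * Real.cos (2 * k₁)
        + 2 * t ^ 2 * Real.cos (2 * k₂) with hEdef
  have hE : 0 ≤ E := by
    have h1 := Real.neg_one_le_cos (2 * k₁)
    have h2 := Real.neg_one_le_cos (2 * k₂)
    nlinarith [sq_nonneg m, sq_nonneg t]
  have hchar : Matrix.charmatrix (blochH t m k₁ k₂) =
    !![X - C (m:ℂ), C ((t:ℂ) * (1 + exp (2 * I * k₂))), 0, -C ((t:ℂ) * (1 + exp (-2 * I * k₁)));
       C ((t:ℂ) * (1 + exp (-2 * I * k₂))), X + C (m:ℂ), C ((t:ℂ) * (1 + exp (-2 * I * k₁))), 0;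
       0, C ((t:ℂ) * (1 + exp (2 * I * k₁))), X - C (m:ℂ), C ((t:ℂ) * (1 + exp (-2 * I * k₂)));
       -C ((t:ℂ) * (1 + exp (2 * I * k₁))), 0, C ((t:ℂ) * (1 + exp (2 * I * k₂))), X + C (m:ℂ)] := by
    ext i j
    fin_cases i <;> fin_cases j <;>
      simp [blochH, Matrix.charmatrix_apply, Matrix.diagonal, sub_eq_add_neg]
  have hC : (C (m:ℂ)) ^ 2 + C ((t:ℂ) * (1 + exp (2 * I * k₁))) * C ((t:ℂ) * (1 + exp (-2 * I * k₁)))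
      + C ((t:ℂ) * (1 + exp (2 * I * k₂))) * C ((t:ℂ) * (1 + exp (-2 * I * k₂)))
      = C ((E : ℝ) : ℂ) := by
    rw [← map_mul, ← map_mul, ← map_pow, ← map_add, ← map_add]
    congr 1
    have ha : exp (2 * I * k₁) * exp (-2 * I * k₁) = 1 := by
      rw [← Complex.exp_add]; ring_nf; exact Complex.exp_zero
    have hb : exp (2 * I * k₂) * exp (-2 * I * k₂) = 1 := by
      rw [← Complex.exp_add]; ring_nf; exact Complex.exp_zero
    have h1 := expcos k₁
    have h2 := expcos k₂
    rw [hEdef]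
    push_cast [] at h1 h2 ⊢
    linear_combination (t:ℂ)^2 * ha + (t:ℂ)^2 * hb + (t:ℂ)^2 * h1 + (t:ℂ)^2 * h2
  have h1 : (blochH t m k₁ k₂).charpoly = (X ^ 2 - C ((E : ℝ) : ℂ)) ^ 2 := by
    rw [Matrix.charpoly, hchar, det4, ← hC]
    ring
  refine ⟨h1, ?_⟩
  set s : ℂ := ((Real.sqrt E : ℝ) : ℂ) with hsdef
  have hs : s ^ 2 = ((E : ℝ) : ℂ) := by
    rw [hsdef]; norm_cast; exact Real.sq_sqrt hE
  have hfac : (blochH t m k₁ k₂).charpoly = (X - C s) ^ 2 * (X - C (-s)) ^ 2 := by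
    rw [h1, ← hs, map_neg, map_pow]
    ring
  rw [hfac, Polynomial.roots_mul, Polynomial.roots_pow, Polynomial.roots_pow,
    Polynomial.roots_X_sub_C, Polynomial.roots_X_sub_C]
  · rfl
  · exact mul_ne_zero (pow_ne_zero _ (X_sub_C_ne_zero s)) (pow_ne_zero _ (X_sub_C_ne_zero (-s)))
end

section
/- Let t ∈ ℝ and m ≠ 0, and for k ∈ ℝ² set E(t,m,k) := √(m² + 4t² + 2t²·cos(2k₁) + 2t²·cos(2k₂)) (which is strictly positive) and p(k) := (1/2)·(I₄ − E(t,m,k)⁻¹ · h(t,m,k)). Then for every k ∈ ℝ²: p(k) is Hermitian, p(k)·p(k) = p(k), the trace of p(k) equals 2, and h(t,m,k)·p(k) = −E(t,m,k)·p(k). That is, p(k) is the rank-two Fermi projection onto the negative-energy band of h(t,m,k). -/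
open Complex

/-- The positive-energy band of the π-flux Bloch Hamiltonian. -/
noncomputable def bandE (t m k₁ k₂ : ℝ) : ℝ :=
  Real.sqrt (m ^ 2 + 4 * t ^ 2 + 2 * t ^ 2 * Real.cos (2 * k₁)
    + 2 * t ^ 2 * Real.cos (2 * k₂))

/-- The Fermi projection `p(k) = (1/2)(1 − E(k)⁻¹ h(k))` onto the negative band. -/
noncomputable def fermiP (t m k₁ k₂ : ℝ) : Matrix (Fin 4) (Fin 4) ℂ :=
  (1 / 2 : ℂ) • ((1 : Matrix (Fin 4) (Fin 4) ℂ)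
    - ((bandE t m k₁ k₂ : ℝ) : ℂ)⁻¹ • blochH t m k₁ k₂)

lemma exp_mul_exp_neg' (x : ℝ) : cexp (2 * I * x) * cexp (-(2 * I * x)) = 1 := by
  rw [← Complex.exp_add]; ring_nf; exact Complex.exp_zero

lemma exp_add_exp_neg' (x : ℝ) :
    cexp (2 * I * x) + cexp (-(2 * I * x)) = 2 * Complex.cos (2 * (x : ℂ)) := by
  rw [Complex.cos]; ring_nf

lemma conj_exp_pos (x : ℝ) : (starRingEnd ℂ) (cexp (2 * I * x)) = cexp (-(2 * I * x)) := by
  rw [← Complex.exp_conj]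
  congr 1
  rw [map_mul, map_mul, Complex.conj_I, Complex.conj_ofReal, map_ofNat]
  ring

lemma conj_exp_neg (x : ℝ) : (starRingEnd ℂ) (cexp (-(2 * I * x))) = cexp (2 * I * x) := by
  rw [← Complex.exp_conj]
  congr 1
  rw [map_neg, map_mul, map_mul, Complex.conj_I, Complex.conj_ofReal, map_ofNat]
  ring

lemma blochH_herm (t m k₁ k₂ : ℝ) : (blochH t m k₁ k₂).IsHermitian := by
  show (blochH t m k₁ k₂).conjTranspose = _
  ext i j
  fin_cases i <;> fin_cases j <;>
    · simp only [blochH, Matrix.conjTranspose_apply, Matrix.cons_val', Matrix.cons_val_zero,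
        Matrix.cons_val_one, Matrix.head_cons, Matrix.empty_val', Matrix.cons_val_fin_one,
        Matrix.head_fin_const, Matrix.cons_val_two, Matrix.cons_val_three, Matrix.tail_cons,
        map_mul, map_add, map_neg, map_one, Complex.conj_ofReal, map_zero]
      rw [show ∀ x : ℝ, -(2:ℂ) * I * x = -(2 * I * x) by intro x; ring] <;>
        simp [conj_exp_pos, conj_exp_neg]

lemma blochH_sq (t m k₁ k₂ : ℝ) :
    blochH t m k₁ k₂ * blochH t m k₁ k₂ =
      ((m ^ 2 + 4 * t ^ 2 + 2 * t ^ 2 * Real.cos (2 * k₁)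
        + 2 * t ^ 2 * Real.cos (2 * k₂) : ℝ) : ℂ) • 1 := by
  have h1 := exp_mul_exp_neg' k₁
  have h2 := exp_mul_exp_neg' k₂
  have h3 := exp_add_exp_neg' k₁
  have h4 := exp_add_exp_neg' k₂
  ext i j
  fin_cases i <;> fin_cases j <;>
    · simp only [blochH, Matrix.mul_apply, Fin.sum_univ_four, Matrix.smul_apply,
        Matrix.one_apply, Matrix.cons_val', Matrix.cons_val_zero, Matrix.cons_val_one,
        Matrix.head_cons, Matrix.empty_val', Matrix.cons_val_fin_one, Matrix.head_fin_const,
        Matrix.cons_val_two, Matrix.cons_val_three, Matrix.tail_cons, Matrix.of_apply, Matrix.cons_val, Fin.isValue]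
      push_cast
      simp only [smul_eq_mul]
      norm_num
      first
      | linear_combination ((t:ℂ)^2) * h1 + ((t:ℂ)^2) * h2 + ((t:ℂ)^2) * h3 + ((t:ℂ)^2) * h4
      | ring

lemma bandE_pos (t m : ℝ) (hm : m ≠ 0) (k₁ k₂ : ℝ) : 0 < bandE t m k₁ k₂ := by
  apply Real.sqrt_pos.mpr
  have c1 := Real.neg_one_le_cos (2 * k₁)
  have c2 := Real.neg_one_le_cos (2 * k₂)
  have hm2 : 0 < m ^ 2 := by positivity
  nlinarith [sq_nonneg t]

lemma blochH_sq' (t m : ℝ) (hm : m ≠ 0) (k₁ k₂ : ℝ) :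
    blochH t m k₁ k₂ * blochH t m k₁ k₂ =
      (((bandE t m k₁ k₂ : ℝ) : ℂ) ^ 2) • 1 := by
  rw [blochH_sq]
  congr 1
  have h : (0:ℝ) ≤ m ^ 2 + 4 * t ^ 2 + 2 * t ^ 2 * Real.cos (2 * k₁)
      + 2 * t ^ 2 * Real.cos (2 * k₂) := by
    have := bandE_pos t m hm k₁ k₂
    by_contra hc
    push_neg at hc
    rw [bandE, Real.sqrt_eq_zero_of_nonpos hc.le] at this
    exact lt_irrefl _ this
  rw [show ((bandE t m k₁ k₂ : ℝ) : ℂ) ^ 2 = ((bandE t m k₁ k₂ ^ 2 : ℝ) : ℂ) by push_cast; ring]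
  rw [bandE, Real.sq_sqrt h]

/-- For `m ≠ 0` the band energy is strictly positive, and the Fermi projection `p(k)`
is a Hermitian idempotent of trace two satisfying `h(k) p(k) = −E(k) p(k)`:
it is the rank-two spectral projection onto the negative-energy band. -/
theorem fermiP_is_fermi_projection (t m : ℝ) (hm : m ≠ 0) (k₁ k₂ : ℝ) :
    0 < bandE t m k₁ k₂ ∧
    (fermiP t m k₁ k₂).IsHermitian ∧
    fermiP t m k₁ k₂ * fermiP t m k₁ k₂ = fermiP t m k₁ k₂ ∧
    (fermiP t m k₁ k₂).trace = 2 ∧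
    blochH t m k₁ k₂ * fermiP t m k₁ k₂ =
      (-((bandE t m k₁ k₂ : ℝ) : ℂ)) • fermiP t m k₁ k₂ := by
  have hE := bandE_pos t m hm k₁ k₂
  have hEc : ((bandE t m k₁ k₂ : ℝ) : ℂ) ≠ 0 := by
    exact_mod_cast ne_of_gt hE
  have hsq := blochH_sq' t m hm k₁ k₂
  refine ⟨hE, ?_, ?_, ?_, ?_⟩
  · -- Hermitian
    show (fermiP t m k₁ k₂).conjTranspose = _
    rw [fermiP, Matrix.conjTranspose_smul, Matrix.conjTranspose_sub,
      Matrix.conjTranspose_one, Matrix.conjTranspose_smul, blochH_herm]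
    congr 1
    · simp
    · congr 1
      simp [Complex.conj_ofReal]
  · -- idempotent
    rw [fermiP]
    simp only [Matrix.smul_mul, Matrix.mul_smul, sub_mul, mul_sub, one_mul, mul_one,
      smul_sub, smul_smul, hsq]
    match_scalars <;> (field_simp; try ring)
  · -- trace
    have htr : (blochH t m k₁ k₂).trace = 0 := by
      simp [blochH, Matrix.trace, Fin.sum_univ_four, Matrix.diag]
      try ring
    rw [fermiP, Matrix.trace_smul, Matrix.trace_sub, Matrix.trace_smul, htr, Matrix.trace_one]
    norm_num
  · -- eigen-equation
    rw [fermiP]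
    simp only [Matrix.mul_smul, mul_sub, mul_one, smul_sub, smul_smul, hsq]
    match_scalars <;> field_simp <;> ring
end

section
/- Let t > 0 and m > 0, and let p(k) := (1/2)·(I₄ − E(t,m,k)⁻¹ · h(t,m,k)) be the Fermi projection onto the negative band of the π-flux Bloch Hamiltonian. There exist constants C > 0 and c > 0 (depending only on t and m) such that for every x = (x₁,x₂) ∈ ℤ², the matrix (2π)^{−2} ∫_{[0,2π]²} e^{i(k₁x₁ + k₂x₂)} · p(k) dk has operator norm at most C · e^{−c(|x₁| + |x₂|)}; i.e. the position-space kernel of the Fermi projection decays exponentially (Combes–Thomas estimate). -/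
open Complex

/-- `fermiP` viewed as a continuous linear endomorphism of Euclidean space, so that its
operator norm is available. -/
noncomputable def fermiPOp (t m k₁ k₂ : ℝ) :
    EuclideanSpace ℂ (Fin 4) →L[ℂ] EuclideanSpace ℂ (Fin 4) :=
  Matrix.toEuclideanCLM (𝕜 := ℂ) (fermiP t m k₁ k₂)

namespace CT

abbrev E4 := EuclideanSpace ℂ (Fin 4) →L[ℂ] EuclideanSpace ℂ (Fin 4)

noncomputable def cM (A : Matrix (Fin 4) (Fin 4) ℂ) : E4 := Matrix.toEuclideanCLM (𝕜 := ℂ) A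

noncomputable def m0 (t m : ℝ) : Matrix (Fin 4) (Fin 4) ℂ :=
  !![(m:ℂ), -t, 0, t; -t, -m, -t, 0; 0, -t, m, -t; t, 0, -t, -m]
noncomputable def m1 (t : ℝ) : Matrix (Fin 4) (Fin 4) ℂ :=
  !![0,0,0,0; 0,0,0,0; 0,-t,0,0; (t:ℂ),0,0,0]
noncomputable def m2 (t : ℝ) : Matrix (Fin 4) (Fin 4) ℂ :=
  !![0,0,0,(t:ℂ); 0,0,-t,0; 0,0,0,0; 0,0,0,0]
noncomputable def m3 (t : ℝ) : Matrix (Fin 4) (Fin 4) ℂ :=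
  !![0,-(t:ℂ),0,0; 0,0,0,0; 0,0,0,0; 0,0,-t,0]
noncomputable def m4 (t : ℝ) : Matrix (Fin 4) (Fin 4) ℂ :=
  !![0,0,0,0; -(t:ℂ),0,0,0; 0,0,0,-t; 0,0,0,0]

/-- complex continuation of the Bloch Hamiltonian, as CLM. -/
noncomputable def hCL (t m : ℝ) (z₁ z₂ : ℂ) : E4 :=
  cM (m0 t m) + exp (2 * I * z₁) • cM (m1 t) + exp (-2 * I * z₁) • cM (m2 t)
    + exp (2 * I * z₂) • cM (m3 t) + exp (-2 * I * z₂) • cM (m4 t)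

/-- complex continuation of `bandE ^ 2`. -/
noncomputable def WC (t m : ℝ) (z₁ z₂ : ℂ) : ℂ :=
  (m:ℂ)^2 + 4*(t:ℂ)^2 + (t:ℂ)^2 * (exp (2 * I * z₁) + exp (-2 * I * z₁))
    + (t:ℂ)^2 * (exp (2 * I * z₂) + exp (-2 * I * z₂))

/-- complex continuation of the Fermi projection. -/
noncomputable def pC (t m : ℝ) (z₁ z₂ : ℂ) : E4 :=
  (1/2 : ℂ) • ((1 : E4) - WC t m z₁ z₂ ^ (-(1/2) : ℂ) • hCL t m z₁ z₂)

lemma blochH_decomp (t m : ℝ) (k₁ k₂ : ℝ) :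
    blochH t m k₁ k₂ = m0 t m + exp (2 * I * k₁) • m1 t + exp (-2 * I * k₁) • m2 t
      + exp (2 * I * k₂) • m3 t + exp (-2 * I * k₂) • m4 t := by
  ext i j
  fin_cases i <;> fin_cases j <;>
      simp [blochH, m0, m1, m2, m3, m4, Matrix.add_apply, Matrix.smul_apply] <;>
    (try ring) <;> simp [Matrix.vecHead, Matrix.vecTail, Function.comp] <;> try ring

lemma hCL_real (t m : ℝ) (k₁ k₂ : ℝ) :
    hCL t m k₁ k₂ = cM (blochH t m k₁ k₂) := by
  rw [blochH_decomp]
  simp only [cM, map_add, map_smul, hCL]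

lemma WC_real (t m : ℝ) (k₁ k₂ : ℝ) :
    WC t m k₁ k₂ = ((m ^ 2 + 4 * t ^ 2 + 2 * t ^ 2 * Real.cos (2 * k₁)
      + 2 * t ^ 2 * Real.cos (2 * k₂) : ℝ) : ℂ) := by
  have h : ∀ a : ℝ, exp (2 * I * a) + exp (-2 * I * a) = 2 * Real.cos (2 * a) := by
    intro a
    rw [show (2 * I * (a:ℂ)) = (2*a:ℂ) * I by push_cast; ring,
      show (-2 * I * (a:ℂ)) = -((2*a:ℂ)) * I by push_cast; ring, ← Complex.two_cos]
    push_cast; ring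
  rw [WC, h, h]; push_cast; ring


lemma wpos (t m : ℝ) (hm : 0 < m) (k₁ k₂ : ℝ) :
    0 < m ^ 2 + 4 * t ^ 2 + 2 * t ^ 2 * Real.cos (2 * k₁) + 2 * t ^ 2 * Real.cos (2 * k₂) := by
  nlinarith [Real.neg_one_le_cos (2*k₁), Real.neg_one_le_cos (2*k₂), sq_nonneg t, sq_nonneg m, hm]

lemma pC_real (t m : ℝ) (hm : 0 < m) (k₁ k₂ : ℝ) :
    pC t m k₁ k₂ = fermiPOp t m k₁ k₂ := by
  have hw := wpos t m hm k₁ k₂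
  have h1 : WC t m (k₁:ℂ) (k₂:ℂ) ^ (-(1/2) : ℂ) = ((bandE t m k₁ k₂ : ℝ) : ℂ)⁻¹ := by
    rw [WC_real, show (-(1/2):ℂ) = ((-(1/2):ℝ):ℂ) by norm_num, ← Complex.ofReal_cpow hw.le,
      Real.rpow_neg hw.le, bandE, Real.sqrt_eq_rpow]
    push_cast
    ring
  rw [fermiPOp, fermiP, map_smul, map_sub, map_one, map_smul, pC, hCL_real, h1]
  rfl

noncomputable def v0 (t m : ℝ) : ℝ := Real.log (1 + m^2/(8*t^2)) / 2

lemma v0_pos (t m : ℝ) (ht : 0 < t) (hm : 0 < m) : 0 < v0 t m := by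
  have h : (1:ℝ) < 1 + m^2/(8*t^2) := by
    have : 0 < m^2/(8*t^2) := by positivity
    linarith
  exact div_pos (Real.log_pos h) two_pos

lemma exp_two_v0 (t m : ℝ) (ht : 0 < t) (hm : 0 < m) :
    Real.exp (2 * v0 t m) = 1 + m^2/(8*t^2) := by
  have h : (0:ℝ) < 1 + m^2/(8*t^2) := by positivity
  rw [v0, show 2 * (Real.log (1 + m^2/(8*t^2)) / 2) = Real.log (1 + m^2/(8*t^2)) by ring,
    Real.exp_log h]

lemma exp_re_ge (z : ℂ) : -Real.exp z.re ≤ (exp z).re := by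
  have h1 : |(exp z).re| ≤ ‖exp z‖ := Complex.abs_re_le_norm _
  rw [Complex.norm_exp] at h1
  have := neg_abs_le (exp z).re
  linarith

lemma norm_exp_2I (z : ℂ) (t m : ℝ) (h : |z.im| ≤ v0 t m) :
    ‖exp (2 * I * z)‖ ≤ Real.exp (2 * v0 t m) := by
  rw [Complex.norm_exp]
  apply Real.exp_le_exp.mpr
  have h2 : (2 * I * z).re = -2 * z.im := by simp
  rw [h2]
  have h3 := abs_le.mp h
  linarith [h3.1, h3.2]

lemma norm_exp_m2I (z : ℂ) (t m : ℝ) (h : |z.im| ≤ v0 t m) :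
    ‖exp (-2 * I * z)‖ ≤ Real.exp (2 * v0 t m) := by
  rw [Complex.norm_exp]
  apply Real.exp_le_exp.mpr
  have h2 : (-2 * I * z).re = 2 * z.im := by simp
  rw [h2]
  have h3 := abs_le.mp h
  linarith [h3.1, h3.2]

lemma WC_re (t m : ℝ) (ht : 0 < t) (hm : 0 < m) {z₁ z₂ : ℂ}
    (h₁ : |z₁.im| ≤ v0 t m) (h₂ : |z₂.im| ≤ v0 t m) :
    m^2/2 ≤ (WC t m z₁ z₂).re := by
  have hre : (WC t m z₁ z₂).re = m^2 + 4*t^2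
      + t^2 * ((exp (2*I*z₁)).re + (exp (-2*I*z₁)).re)
      + t^2 * ((exp (2*I*z₂)).re + (exp (-2*I*z₂)).re) := by
    simp [WC, Complex.add_re, Complex.mul_re, ← Complex.ofReal_pow]
  have key : ∀ z : ℂ, |z.im| ≤ v0 t m →
      -(2 * (1 + m^2/(8*t^2))) ≤ (exp (2*I*z)).re + (exp (-2*I*z)).re := by
    intro z hz
    have e1 := exp_re_ge (2*I*z)
    have e2 := exp_re_ge (-2*I*z)
    have r1 : (2*I*z : ℂ).re = -2 * z.im := by simp
    have r2 : (-2*I*z : ℂ).re = 2 * z.im := by simp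
    rw [r1] at e1; rw [r2] at e2
    have hz' := abs_le.mp hz
    have b1 : Real.exp (-2 * z.im) ≤ 1 + m^2/(8*t^2) := by
      rw [← exp_two_v0 t m ht hm]
      apply Real.exp_le_exp.mpr; linarith [hz'.1]
    have b2 : Real.exp (2 * z.im) ≤ 1 + m^2/(8*t^2) := by
      rw [← exp_two_v0 t m ht hm]
      apply Real.exp_le_exp.mpr; linarith [hz'.2]
    linarith
  have k1 := key z₁ h₁
  have k2 := key z₂ h₂
  have ht2 : 0 < t^2 := by positivity
  rw [hre]
  have j1 : t^2 * (-(2 * (1 + m^2/(8*t^2)))) ≤ t^2 * ((exp (2*I*z₁)).re + (exp (-2*I*z₁)).re) :=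
    mul_le_mul_of_nonneg_left k1 ht2.le
  have j2 : t^2 * (-(2 * (1 + m^2/(8*t^2)))) ≤ t^2 * ((exp (2*I*z₂)).re + (exp (-2*I*z₂)).re) :=
    mul_le_mul_of_nonneg_left k2 ht2.le
  have expand : t^2 * (-(2 * (1 + m^2/(8*t^2)))) = -2*t^2 - m^2/4 := by
    field_simp; ring
  rw [expand] at j1 j2
  linarith

lemma WC_slit (t m : ℝ) (ht : 0 < t) (hm : 0 < m) {z₁ z₂ : ℂ}
    (h₁ : |z₁.im| ≤ v0 t m) (h₂ : |z₂.im| ≤ v0 t m) :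
    WC t m z₁ z₂ ∈ Complex.slitPlane := by
  rw [Complex.mem_slitPlane_iff]
  left
  have := WC_re t m ht hm h₁ h₂
  nlinarith [sq_nonneg m, hm]

noncomputable def alphaC (m : ℝ) : ℝ := (m^2/2) ^ (-(1/2) : ℝ)

lemma alphaC_pos (m : ℝ) (hm : 0 < m) : 0 < alphaC m :=
  Real.rpow_pos_of_pos (by positivity) _

lemma cpow_bound (t m : ℝ) (ht : 0 < t) (hm : 0 < m) {z₁ z₂ : ℂ}
    (h₁ : |z₁.im| ≤ v0 t m) (h₂ : |z₂.im| ≤ v0 t m) :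
    ‖WC t m z₁ z₂ ^ (-(1/2) : ℂ)‖ ≤ alphaC m := by
  have hre := WC_re t m ht hm h₁ h₂
  have hm2 : (0:ℝ) < m^2/2 := by positivity
  have habs : m^2/2 ≤ ‖WC t m z₁ z₂‖ :=
    hre.trans ((Complex.re_le_norm _))
  rw [show (-(1/2) : ℂ) = ((-(1/2) : ℝ) : ℂ) by norm_num,
    Complex.norm_cpow_real, alphaC]
  rw [Real.rpow_neg (by positivity), Real.rpow_neg hm2.le]
  apply inv_anti₀ (Real.rpow_pos_of_pos hm2 _)
  exact Real.rpow_le_rpow hm2.le habs (by norm_num)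

lemma norm_smul_E4 (c : ℂ) (A : E4) : ‖c • A‖ = ‖c‖ * ‖A‖ := norm_smul c A

noncomputable def CH (t m : ℝ) : ℝ :=
  ‖cM (m0 t m)‖ + Real.exp (2 * v0 t m) *
    (‖cM (m1 t)‖ + ‖cM (m2 t)‖ + ‖cM (m3 t)‖ + ‖cM (m4 t)‖)

lemma CH_nonneg (t m : ℝ) : 0 ≤ CH t m := by
  have h0 := Real.exp_pos (2 * v0 t m)
  have n0 : (0:ℝ) ≤ ‖cM (m0 t m)‖ := norm_nonneg _
  have n1 : (0:ℝ) ≤ ‖cM (m1 t)‖ := norm_nonneg _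
  have n2 : (0:ℝ) ≤ ‖cM (m2 t)‖ := norm_nonneg _
  have n3 : (0:ℝ) ≤ ‖cM (m3 t)‖ := norm_nonneg _
  have n4 : (0:ℝ) ≤ ‖cM (m4 t)‖ := norm_nonneg _
  have : (0:ℝ) ≤ Real.exp (2 * v0 t m) * (‖cM (m1 t)‖ + ‖cM (m2 t)‖ + ‖cM (m3 t)‖ + ‖cM (m4 t)‖) :=
    mul_nonneg h0.le (by linarith)
  rw [CH]; linarith

lemma hCL_bound (t m : ℝ) {z₁ z₂ : ℂ}
    (h₁ : |z₁.im| ≤ v0 t m) (h₂ : |z₂.im| ≤ v0 t m) :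
    ‖hCL t m z₁ z₂‖ ≤ CH t m := by
  have tri : ∀ a b c d e : E4, ‖a+b+c+d+e‖ ≤ ‖a‖+‖b‖+‖c‖+‖d‖+‖e‖ := by
    intro a b c d e
    have q1 := norm_add_le (a+b+c+d) e
    have q2 := norm_add_le (a+b+c) d
    have q3 := norm_add_le (a+b) c
    have q4 := norm_add_le a b
    linarith
  refine le_trans (tri _ _ _ _ _) ?_
  have e1 := norm_exp_2I z₁ t m h₁
  have e2 := norm_exp_m2I z₁ t m h₁
  have e3 := norm_exp_2I z₂ t m h₂
  have e4 := norm_exp_m2I z₂ t m h₂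
  have b1 : ‖exp (2*I*z₁) • cM (m1 t)‖ ≤ Real.exp (2*v0 t m) * ‖cM (m1 t)‖ := by
    rw [norm_smul_E4]; exact mul_le_mul_of_nonneg_right e1 (norm_nonneg _)
  have b2 : ‖exp (-2*I*z₁) • cM (m2 t)‖ ≤ Real.exp (2*v0 t m) * ‖cM (m2 t)‖ := by
    rw [norm_smul_E4]; exact mul_le_mul_of_nonneg_right e2 (norm_nonneg _)
  have b3 : ‖exp (2*I*z₂) • cM (m3 t)‖ ≤ Real.exp (2*v0 t m) * ‖cM (m3 t)‖ := by
    rw [norm_smul_E4]; exact mul_le_mul_of_nonneg_right e3 (norm_nonneg _)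
  have b4 : ‖exp (-2*I*z₂) • cM (m4 t)‖ ≤ Real.exp (2*v0 t m) * ‖cM (m4 t)‖ := by
    rw [norm_smul_E4]; exact mul_le_mul_of_nonneg_right e4 (norm_nonneg _)
  rw [CH]
  linarith

noncomputable def Mb (t m : ℝ) : ℝ := (1 + alphaC m * CH t m) / 2

lemma Mb_pos (t m : ℝ) (hm : 0 < m) : 0 < Mb t m := by
  have h1 := alphaC_pos m hm
  have h2 := CH_nonneg t m
  have : 0 ≤ alphaC m * CH t m := by positivity
  rw [Mb]; linarith

lemma pC_bound (t m : ℝ) (ht : 0 < t) (hm : 0 < m) {z₁ z₂ : ℂ}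
    (h₁ : |z₁.im| ≤ v0 t m) (h₂ : |z₂.im| ≤ v0 t m) :
    ‖pC t m z₁ z₂‖ ≤ Mb t m := by
  rw [pC, norm_smul_E4]
  have h12 : ‖(1/2 : ℂ)‖ = (1/2 : ℝ) := by norm_num
  have hone : ‖(1 : E4)‖ ≤ 1 := ContinuousLinearMap.norm_id_le
  have hsm : ‖WC t m z₁ z₂ ^ (-(1/2) : ℂ) • hCL t m z₁ z₂‖ ≤ alphaC m * CH t m := by
    rw [norm_smul_E4]
    exact mul_le_mul (cpow_bound t m ht hm h₁ h₂) (hCL_bound t m h₁ h₂) (norm_nonneg _)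
      (alphaC_pos m hm).le
  have hns := norm_sub_le (1 : E4) (WC t m z₁ z₂ ^ (-(1/2) : ℂ) • hCL t m z₁ z₂)
  rw [Mb, h12]
  linarith

lemma exp2_per (z : ℂ) : exp (2 * I * (z + 2 * Real.pi)) = exp (2 * I * z) := by
  rw [show 2 * I * (z + 2 * Real.pi) = 2 * I * z + ((2:ℤ) : ℂ) * (2 * Real.pi * I) by
    push_cast; ring, Complex.exp_add, Complex.exp_int_mul_two_pi_mul_I, mul_one]

lemma expm2_per (z : ℂ) : exp (-2 * I * (z + 2 * Real.pi)) = exp (-2 * I * z) := by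
  rw [show -2 * I * (z + 2 * Real.pi) = -2 * I * z + ((-2:ℤ) : ℂ) * (2 * Real.pi * I) by
    push_cast; ring, Complex.exp_add, Complex.exp_int_mul_two_pi_mul_I, mul_one]

lemma pC_per₁ (t m : ℝ) (z₁ z₂ : ℂ) : pC t m (z₁ + 2 * Real.pi) z₂ = pC t m z₁ z₂ := by
  simp only [pC, WC, hCL, exp2_per, expm2_per]

lemma pC_per₂ (t m : ℝ) (z₁ z₂ : ℂ) : pC t m z₁ (z₂ + 2 * Real.pi) = pC t m z₁ z₂ := by
  simp only [pC, WC, hCL, exp2_per, expm2_per]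

lemma pC_diff₁ (t m : ℝ) (ht : 0 < t) (hm : 0 < m) {z₁ z₂ : ℂ}
    (h₁ : |z₁.im| ≤ v0 t m) (h₂ : |z₂.im| ≤ v0 t m) :
    DifferentiableAt ℂ (fun z => pC t m z z₂) z₁ := by
  have hW : DifferentiableAt ℂ (fun z => WC t m z z₂) z₁ := by
    unfold WC; fun_prop
  have hslit := WC_slit t m ht hm h₁ h₂
  have hcpow : DifferentiableAt ℂ (fun z => WC t m z z₂ ^ (-(1/2) : ℂ)) z₁ :=
    hW.cpow (differentiableAt_const _) hslit
  have hH : DifferentiableAt ℂ (fun z => hCL t m z z₂) z₁ := by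
    unfold hCL; fun_prop
  exact ((differentiableAt_const _).sub (hcpow.smul hH)).const_smul (1/2 : ℂ)

lemma pC_diff₂ (t m : ℝ) (ht : 0 < t) (hm : 0 < m) {z₁ z₂ : ℂ}
    (h₁ : |z₁.im| ≤ v0 t m) (h₂ : |z₂.im| ≤ v0 t m) :
    DifferentiableAt ℂ (fun z => pC t m z₁ z) z₂ := by
  have hW : DifferentiableAt ℂ (fun z => WC t m z₁ z) z₂ := by
    unfold WC; fun_prop
  have hslit := WC_slit t m ht hm h₁ h₂
  have hcpow : DifferentiableAt ℂ (fun z => WC t m z₁ z ^ (-(1/2) : ℂ)) z₂ :=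
    hW.cpow (differentiableAt_const _) hslit
  have hH : DifferentiableAt ℂ (fun z => hCL t m z₁ z) z₂ := by
    unfold hCL; fun_prop
  exact ((differentiableAt_const _).sub (hcpow.smul hH)).const_smul (1/2 : ℂ)

lemma shift_integral (f : ℂ → E4) (v : ℝ)
    (hper : ∀ y : ℝ, f (((2*Real.pi : ℝ) : ℂ) + y * I) = f (y * I))
    (hd : ∀ z : ℂ, z ∈ Set.uIcc (0:ℝ) (2*Real.pi) ×ℂ Set.uIcc (0:ℝ) v →
      DifferentiableAt ℂ f z) :
    ∫ x in (0:ℝ)..(2*Real.pi), f x = ∫ x in (0:ℝ)..(2*Real.pi), f (x + v * I) := by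
  set w : ℂ := ((2*Real.pi : ℝ) : ℂ) + v * I with hw
  have hre : w.re = 2*Real.pi := by simp [hw]
  have him : w.im = v := by simp [hw]
  have h := Complex.integral_boundary_rect_eq_zero_of_differentiableOn f 0 w
    (fun z hz => (hd z (by rwa [Complex.zero_re, Complex.zero_im, hre, him] at hz)).differentiableWithinAt)
  rw [Complex.zero_re, Complex.zero_im, hre, him] at h
  have hC : (∫ y in (0:ℝ)..v, f (((2*Real.pi : ℝ) : ℂ) + y * I))
      = ∫ y in (0:ℝ)..v, f ((y:ℂ) * I) := by
    simp only [hper]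
  simp only [Complex.ofReal_zero, zero_mul, add_zero, zero_add] at h
  rw [hC] at h
  have h2 : (∫ x in (0:ℝ)..(2*Real.pi), f x) - (∫ x in (0:ℝ)..(2*Real.pi), f (x + v * I)) = 0 := by
    have := h
    abel_nf at this ⊢
    convert this using 2
    simp only [add_comm]
  exact sub_eq_zero.mp h2

lemma Lkey (t m : ℝ) (ht : 0 < t) (hm : 0 < m) (b : ℤ) (q : ℂ → E4)
    (hper : ∀ z : ℂ, q (z + 2*Real.pi) = q z)
    (hdiff : ∀ z : ℂ, |z.im| ≤ v0 t m → DifferentiableAt ℂ q z)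
    (hbd : ∀ z : ℂ, |z.im| ≤ v0 t m → ‖q z‖ ≤ Mb t m) :
    ‖∫ k in (0:ℝ)..(2*Real.pi), exp (I * k * b) • q k‖ ≤
      (2*Real.pi) * (Mb t m * Real.exp (-(v0 t m * |(b:ℝ)|))) := by
  have hv0 := v0_pos t m ht hm
  set v : ℝ := if 0 ≤ b then v0 t m else -(v0 t m) with hvdef
  have hv : |v| ≤ v0 t m := by
    rw [hvdef]; split_ifs
    · rw [_root_.abs_of_nonneg hv0.le]
    · rw [abs_neg, _root_.abs_of_nonneg hv0.le]
  have hvb : v * (b:ℝ) = v0 t m * |(b:ℝ)| := by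
    rw [hvdef]; split_ifs with hb
    · rw [_root_.abs_of_nonneg (by exact_mod_cast hb : (0:ℝ) ≤ (b:ℝ))]
    · rw [_root_.abs_of_neg (by exact_mod_cast (not_le.mp hb) : (b:ℝ) < 0)]; ring
  set f : ℂ → E4 := fun z => exp (I * z * b) • q z with hf
  have hexp_per : ∀ y : ℝ, f (((2*Real.pi : ℝ) : ℂ) + y * I) = f ((y:ℂ) * I) := by
    intro y
    rw [hf]
    simp only
    have e1 : (I * (((2*Real.pi : ℝ) : ℂ) + y * I) * b) =
        I * ((y:ℂ) * I) * b + ((b:ℤ) : ℂ) * (2 * Real.pi * I) := by push_cast; ring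
    have e2 : q (((2*Real.pi : ℝ) : ℂ) + y * I) = q ((y:ℂ) * I) := by
      rw [show (((2*Real.pi : ℝ) : ℂ) + y * I) = ((y:ℂ) * I) + 2*Real.pi by push_cast; ring]
      exact hper _
    rw [e1, Complex.exp_add, Complex.exp_int_mul_two_pi_mul_I, mul_one, e2]
  have hdf : ∀ z : ℂ, z ∈ Set.uIcc (0:ℝ) (2*Real.pi) ×ℂ Set.uIcc (0:ℝ) v →
      DifferentiableAt ℂ f z := by
    intro z hz
    have him : |z.im| ≤ v0 t m := by
      have h2 := hz.2
      simp only [Set.mem_preimage] at h2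
      rcases Set.mem_uIcc.mp h2 with ⟨ha, hb2⟩ | ⟨ha, hb2⟩
      · rw [_root_.abs_of_nonneg ha]
        exact le_trans (le_trans hb2 (le_abs_self v)) hv
      · rw [_root_.abs_of_nonpos hb2]
        exact le_trans (le_trans (by linarith : -z.im ≤ -v) (neg_le_abs v)) hv
    have hde : DifferentiableAt ℂ (fun z : ℂ => exp (I * z * b)) z := by fun_prop
    exact hde.smul (hdiff z him)
  have hshift := shift_integral f v hexp_per hdf
  rw [hshift]
  have hbound : ∀ x ∈ Set.uIoc (0:ℝ) (2*Real.pi),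
      ‖f (x + v * I)‖ ≤ Mb t m * Real.exp (-(v0 t m * |(b:ℝ)|)) := by
    intro x hx
    rw [hf]
    simp only
    rw [norm_smul_E4]
    have hre : (I * ((x:ℂ) + v * I) * b).re = -(v * b) := by
      simp [Complex.mul_re, Complex.add_re, Complex.add_im]
    have hexp : ‖exp (I * ((x:ℂ) + v * I) * b)‖ = Real.exp (-(v * b)) := by
      rw [Complex.norm_exp, hre]
    have him : |((x:ℂ) + v * I).im| ≤ v0 t m := by
      simpa using hv
    have hq := hbd _ him
    rw [hexp, hvb]
    exact mul_le_mul le_rfl hq (norm_nonneg _) (Real.exp_pos _).le |>.trans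
      (by rw [mul_comm])
  calc ‖∫ x in (0:ℝ)..(2*Real.pi), f (x + v * I)‖
      ≤ Mb t m * Real.exp (-(v0 t m * |(b:ℝ)|)) * |2*Real.pi - 0| :=
        intervalIntegral.norm_integral_le_of_norm_le_const hbound
    _ = (2*Real.pi) * (Mb t m * Real.exp (-(v0 t m * |(b:ℝ)|))) := by
        rw [sub_zero, _root_.abs_of_nonneg (by positivity : (0:ℝ) ≤ 2*Real.pi)]; ring

lemma pC_contR (t m : ℝ) (ht : 0 < t) (hm : 0 < m) :
    Continuous (fun p : ℝ × ℝ => pC t m p.1 p.2) := by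
  have hv0 := v0_pos t m ht hm
  have hW : Continuous (fun p : ℝ × ℝ => WC t m p.1 p.2) := by
    unfold WC; fun_prop
  have hH : Continuous (fun p : ℝ × ℝ => hCL t m p.1 p.2) := by
    unfold hCL; fun_prop
  rw [continuous_iff_continuousAt]
  intro p
  have him : ∀ k : ℝ, |((k:ℂ)).im| ≤ v0 t m := by
    intro k; simp [hv0.le]
  have hslit := WC_slit t m ht hm (him p.1) (him p.2)
  have hcpow : ContinuousAt (fun p : ℝ × ℝ => WC t m p.1 p.2 ^ (-(1/2) : ℂ)) p :=
    hW.continuousAt.cpow continuousAt_const hslit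
  exact (continuousAt_const.sub (hcpow.smul hH.continuousAt)).const_smul (1/2 : ℂ)

lemma integrand_cont (t m : ℝ) (ht : 0 < t) (hm : 0 < m) (x₁ x₂ : ℤ) :
    Continuous (fun p : ℝ × ℝ =>
      exp (I * ((p.1:ℂ) * (x₁:ℂ) + (p.2:ℂ) * (x₂:ℂ))) • pC t m p.1 p.2) := by
  have h1 : Continuous (fun p : ℝ × ℝ => exp (I * ((p.1:ℂ) * (x₁:ℂ) + (p.2:ℂ) * (x₂:ℂ)))) := by
    fun_prop
  exact h1.smul (pC_contR t m ht hm)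

lemma swap_integrals (t m : ℝ) (ht : 0 < t) (hm : 0 < m) (x₁ x₂ : ℤ) :
    (∫ k₁ in (0:ℝ)..(2*Real.pi), ∫ k₂ in (0:ℝ)..(2*Real.pi),
        exp (I * ((k₁:ℂ) * (x₁:ℂ) + (k₂:ℂ) * (x₂:ℂ))) • pC t m k₁ k₂)
    = ∫ k₂ in (0:ℝ)..(2*Real.pi), ∫ k₁ in (0:ℝ)..(2*Real.pi),
        exp (I * ((k₁:ℂ) * (x₁:ℂ) + (k₂:ℂ) * (x₂:ℂ))) • pC t m k₁ k₂ := by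
  have h2pi : (0:ℝ) ≤ 2*Real.pi := by positivity
  set F : ℝ → ℝ → E4 := fun k₁ k₂ =>
    exp (I * ((k₁:ℂ) * (x₁:ℂ) + (k₂:ℂ) * (x₂:ℂ))) • pC t m k₁ k₂ with hF
  have hcont : Continuous (Function.uncurry F) := by
    have := integrand_cont t m ht hm x₁ x₂
    exact this
  have hint : MeasureTheory.Integrable (Function.uncurry F)
      ((MeasureTheory.volume.restrict (Set.Ioc (0:ℝ) (2*Real.pi))).prod
        (MeasureTheory.volume.restrict (Set.Ioc (0:ℝ) (2*Real.pi)))) := by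
    rw [MeasureTheory.Measure.prod_restrict]
    exact (hcont.continuousOn.integrableOn_compact (isCompact_Icc.prod isCompact_Icc)).mono_set
      (Set.prod_mono Set.Ioc_subset_Icc_self Set.Ioc_subset_Icc_self)
  have hswap := MeasureTheory.integral_integral_swap hint
  simp only [intervalIntegral.integral_of_le h2pi]
  exact hswap

end CT

open CT in
/-- Combes–Thomas estimate: the position-space kernel of the Fermi projection decays
exponentially.  For `t, m > 0` there are constants `C, c > 0` such that the operator norm of
`(2π)⁻² ∫_{[0,2π]²} e^{i(k₁x₁+k₂x₂)} p(k) dk` is at most `C e^{−c(|x₁|+|x₂|)}` for all `x ∈ ℤ²`. -/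
theorem fermiP_kernel_decay (t m : ℝ) (ht : 0 < t) (hm : 0 < m) :
    ∃ C > 0, ∃ c > 0, ∀ x₁ x₂ : ℤ,
      ‖((2 * Real.pi : ℂ) ^ (-2 : ℤ)) •
        ∫ k₁ in (0 : ℝ)..(2 * Real.pi), ∫ k₂ in (0 : ℝ)..(2 * Real.pi),
          Complex.exp (I * (k₁ * x₁ + k₂ * x₂)) • fermiPOp t m k₁ k₂‖ ≤
      C * Real.exp (-c * ((|x₁| : ℝ) + (|x₂| : ℝ))) := by
  have hv0 := v0_pos t m ht hm
  have hMb := Mb_pos t m hm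
  refine ⟨Mb t m, hMb, v0 t m / 2, by positivity, ?_⟩
  intro x₁ x₂
  have hPR : ∀ k₁ k₂ : ℝ, fermiPOp t m k₁ k₂ = pC t m k₁ k₂ :=
    fun a b => (pC_real t m hm a b).symm
  simp only [hPR]
  have hnorm2pi : ‖((2 * Real.pi : ℂ) ^ (-2 : ℤ))‖ = (2*Real.pi)^(-2:ℤ) := by
    rw [norm_zpow, show ((2 * Real.pi : ℂ)) = ((2*Real.pi : ℝ) : ℂ) by push_cast; ring,
      Complex.norm_real, Real.norm_eq_abs,
      _root_.abs_of_nonneg (by positivity : (0:ℝ) ≤ 2*Real.pi)]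
  have habs : ∀ y : ℤ, ((|y| : ℤ) : ℝ) = |(y:ℝ)| := by intro y; push_cast; ring
  have himR : ∀ k : ℝ, |((k:ℂ)).im| ≤ v0 t m := by intro k; simp [hv0.le]
  have hone : ∀ (k : ℝ) (y : ℤ), ‖exp (I * (k:ℂ) * (y:ℂ))‖ = 1 := by
    intro k y
    rw [Complex.norm_exp]
    have : (I * (k:ℂ) * (y:ℂ)).re = 0 := by simp
    rw [this, Real.exp_zero]
  -- the two one-variable estimates
  have inner2 : ∀ k₁ : ℝ,
      ‖∫ k₂ in (0:ℝ)..(2*Real.pi), exp (I * ((k₁:ℂ) * (x₁:ℂ) + (k₂:ℂ) * (x₂:ℂ))) • pC t m k₁ k₂‖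
        ≤ (2*Real.pi) * (Mb t m * Real.exp (-(v0 t m * |(x₂:ℝ)|))) := by
    intro k₁
    set q : ℂ → E4 := fun z => exp (I * (k₁:ℂ) * (x₁:ℂ)) • pC t m k₁ z with hq
    have hcongr : (∫ k₂ in (0:ℝ)..(2*Real.pi),
        exp (I * ((k₁:ℂ) * (x₁:ℂ) + (k₂:ℂ) * (x₂:ℂ))) • pC t m k₁ k₂)
        = ∫ k₂ in (0:ℝ)..(2*Real.pi), exp (I * (k₂:ℂ) * (x₂:ℂ)) • q k₂ := by
      refine intervalIntegral.integral_congr (fun k₂ _ => ?_)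
      rw [hq]; simp only
      rw [smul_smul, ← Complex.exp_add]
      congr 1; ring
    rw [hcongr]
    refine Lkey t m ht hm x₂ q (fun z => ?_) (fun z hz => ?_) (fun z hz => ?_)
    · rw [hq]; simp only [pC_per₂]
    · exact ((pC_diff₂ t m ht hm (himR k₁) hz)).const_smul (exp (I * (k₁:ℂ) * (x₁:ℂ)))
    · rw [hq]; simp only [norm_smul_E4, hone k₁ x₁, one_mul]
      exact pC_bound t m ht hm (himR k₁) hz
  have inner1 : ∀ k₂ : ℝ,
      ‖∫ k₁ in (0:ℝ)..(2*Real.pi), exp (I * ((k₁:ℂ) * (x₁:ℂ) + (k₂:ℂ) * (x₂:ℂ))) • pC t m k₁ k₂‖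
        ≤ (2*Real.pi) * (Mb t m * Real.exp (-(v0 t m * |(x₁:ℝ)|))) := by
    intro k₂
    set q : ℂ → E4 := fun z => exp (I * (k₂:ℂ) * (x₂:ℂ)) • pC t m z k₂ with hq
    have hcongr : (∫ k₁ in (0:ℝ)..(2*Real.pi),
        exp (I * ((k₁:ℂ) * (x₁:ℂ) + (k₂:ℂ) * (x₂:ℂ))) • pC t m k₁ k₂)
        = ∫ k₁ in (0:ℝ)..(2*Real.pi), exp (I * (k₁:ℂ) * (x₁:ℂ)) • q k₁ := by
      refine intervalIntegral.integral_congr (fun k₁ _ => ?_)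
      rw [hq]; simp only
      rw [smul_smul, ← Complex.exp_add]
      congr 1; ring
    rw [hcongr]
    refine Lkey t m ht hm x₁ q (fun z => ?_) (fun z hz => ?_) (fun z hz => ?_)
    · rw [hq]; simp only [pC_per₁]
    · exact ((pC_diff₁ t m ht hm hz (himR k₂))).const_smul (exp (I * (k₂:ℂ) * (x₂:ℂ)))
    · rw [hq]; simp only [norm_smul_E4, hone k₂ x₂, one_mul]
      exact pC_bound t m ht hm hz (himR k₂)
  -- combined bound with max decay
  have key : ‖∫ k₁ in (0:ℝ)..(2*Real.pi), ∫ k₂ in (0:ℝ)..(2*Real.pi),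
      exp (I * ((k₁:ℂ) * (x₁:ℂ) + (k₂:ℂ) * (x₂:ℂ))) • pC t m k₁ k₂‖
      ≤ (2*Real.pi) * ((2*Real.pi) * (Mb t m *
          Real.exp (-(v0 t m * max |(x₁:ℝ)| |(x₂:ℝ)|)))) := by
    rcases le_total |(x₁:ℝ)| |(x₂:ℝ)| with hc | hc
    · have hmax : max |(x₁:ℝ)| |(x₂:ℝ)| = |(x₂:ℝ)| := max_eq_right hc
      rw [hmax]
      calc ‖∫ k₁ in (0:ℝ)..(2*Real.pi), ∫ k₂ in (0:ℝ)..(2*Real.pi),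
            exp (I * ((k₁:ℂ) * (x₁:ℂ) + (k₂:ℂ) * (x₂:ℂ))) • pC t m k₁ k₂‖
          ≤ ((2*Real.pi) * (Mb t m * Real.exp (-(v0 t m * |(x₂:ℝ)|)))) * |2*Real.pi - 0| :=
            intervalIntegral.norm_integral_le_of_norm_le_const (fun k₁ _ => inner2 k₁)
        _ = (2*Real.pi) * ((2*Real.pi) * (Mb t m * Real.exp (-(v0 t m * |(x₂:ℝ)|)))) := by
            rw [sub_zero, _root_.abs_of_nonneg (by positivity : (0:ℝ) ≤ 2*Real.pi)]; ring
    · have hmax : max |(x₁:ℝ)| |(x₂:ℝ)| = |(x₁:ℝ)| := max_eq_left hc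
      rw [hmax, swap_integrals t m ht hm x₁ x₂]
      calc ‖∫ k₂ in (0:ℝ)..(2*Real.pi), ∫ k₁ in (0:ℝ)..(2*Real.pi),
            exp (I * ((k₁:ℂ) * (x₁:ℂ) + (k₂:ℂ) * (x₂:ℂ))) • pC t m k₁ k₂‖
          ≤ ((2*Real.pi) * (Mb t m * Real.exp (-(v0 t m * |(x₁:ℝ)|)))) * |2*Real.pi - 0| :=
            intervalIntegral.norm_integral_le_of_norm_le_const (fun k₂ _ => inner1 k₂)
        _ = (2*Real.pi) * ((2*Real.pi) * (Mb t m * Real.exp (-(v0 t m * |(x₁:ℝ)|)))) := by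
            rw [sub_zero, _root_.abs_of_nonneg (by positivity : (0:ℝ) ≤ 2*Real.pi)]; ring
  rw [norm_smul_E4, hnorm2pi]
  have harith : (2*Real.pi)^(-2:ℤ) * ((2*Real.pi) * ((2*Real.pi) * (Mb t m *
      Real.exp (-(v0 t m * max |(x₁:ℝ)| |(x₂:ℝ)|)))))
      = Mb t m * Real.exp (-(v0 t m * max |(x₁:ℝ)| |(x₂:ℝ)|)) := by
    have h2pi : (2*Real.pi) ≠ 0 := by positivity
    rw [zpow_neg, show ((2*Real.pi)^(2:ℤ)) = (2*Real.pi)*(2*Real.pi) by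
      rw [zpow_two]]
    field_simp
  have hexp : Real.exp (-(v0 t m * max |(x₁:ℝ)| |(x₂:ℝ)|))
      ≤ Real.exp (-(v0 t m / 2) * (|(x₁:ℝ)| + |(x₂:ℝ)|)) := by
    apply Real.exp_le_exp.mpr
    have h1 : |(x₁:ℝ)| ≤ max |(x₁:ℝ)| |(x₂:ℝ)| := le_max_left _ _
    have h2 : |(x₂:ℝ)| ≤ max |(x₁:ℝ)| |(x₂:ℝ)| := le_max_right _ _
    nlinarith [hv0]
  calc (2*Real.pi)^(-2:ℤ) * ‖∫ k₁ in (0:ℝ)..(2*Real.pi), ∫ k₂ in (0:ℝ)..(2*Real.pi),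
        exp (I * ((k₁:ℂ) * (x₁:ℂ) + (k₂:ℂ) * (x₂:ℂ))) • pC t m k₁ k₂‖
      ≤ (2*Real.pi)^(-2:ℤ) * ((2*Real.pi) * ((2*Real.pi) * (Mb t m *
          Real.exp (-(v0 t m * max |(x₁:ℝ)| |(x₂:ℝ)|))))) := by
        apply mul_le_mul_of_nonneg_left key
        positivity
    _ = Mb t m * Real.exp (-(v0 t m * max |(x₁:ℝ)| |(x₂:ℝ)|)) := harith
    _ ≤ Mb t m * Real.exp (-(v0 t m / 2) * (|(x₁:ℝ)| + |(x₂:ℝ)|)) :=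
        mul_le_mul_of_nonneg_left hexp hMb.le
end

section
/- Let L be a positive multiple of 4, t > 0 and m > 0, and let M be the one-body π-flux Hamiltonian on the torus (ZMod L)². Then M is symmetric, every eigenvalue λ of M satisfies |λ| ≥ m (so M has a spectral gap of width 2m around zero), and exactly L²/2 of the L² eigenvalues of M (counted with multiplicity) are negative. Consequently, at U = 0, the many-body ground state in the π-flux sector with holonomies (1,1) is unique and sits at half-filling. -/
/-- The one-body π-flux Hamiltonian on the torus `(ZMod L)²`: staggered mass
`m(−1)^{i₁+i₂}` on the diagonal, horizontal hopping `−t(−1)^{i₂}` (the gauge with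
ℤ₂-field `(−1)^{i₂}` on horizontal edges, carrying a π-flux through every plaquette and
trivial holonomies), and vertical hopping `−t`. -/
noncomputable def piFluxM (L : ℕ) (t m : ℝ) :
    Matrix (ZMod L × ZMod L) (ZMod L × ZMod L) ℝ := fun i j =>
  if j = i then m * (-1 : ℝ) ^ (i.1.val + i.2.val)
  else if j = (i.1 + 1, i.2) ∨ j = (i.1 - 1, i.2) then -t * (-1 : ℝ) ^ i.2.val
  else if j = (i.1, i.2 + 1) ∨ j = (i.1, i.2 - 1) then -t
  else 0

open Matrix Polynomial

namespace PiFluxAux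

variable {L : ℕ}

/-- staggered sign -/
noncomputable def eps (L : ℕ) (i : ZMod L × ZMod L) : ℝ :=
  (-1 : ℝ) ^ (i.1.val + i.2.val)

variable {L : ℕ}

lemma eps_sq (i : ZMod L × ZMod L) : eps L i * eps L i = 1 := by
  unfold eps; rw [← mul_pow]; norm_num

lemma eps_add_fst (h2 : 2 ∣ L) (h1 : 1 < L) (a b : ZMod L) :
    eps L (a + 1, b) = - eps L (a, b) := by
  haveI := Fact.mk h1
  have hval : (a + 1).val % 2 = (a.val + 1) % 2 := by
    rw [ZMod.val_add, ZMod.val_one]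
    exact Nat.mod_mod_of_dvd _ h2
  have hm : ((a + 1).val + b.val) % 2 = (a.val + b.val + 1) % 2 := by omega
  unfold eps
  rw [neg_one_pow_eq_pow_mod_two]
  simp only []
  rw [hm, ← neg_one_pow_eq_pow_mod_two, pow_succ, mul_neg_one]

lemma eps_add_snd (h2 : 2 ∣ L) (h1 : 1 < L) (a b : ZMod L) :
    eps L (a, b + 1) = - eps L (a, b) := by
  haveI := Fact.mk h1
  have hval : (b + 1).val % 2 = (b.val + 1) % 2 := by
    rw [ZMod.val_add, ZMod.val_one]
    exact Nat.mod_mod_of_dvd _ h2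
  have hm : (a.val + (b + 1).val) % 2 = (a.val + b.val + 1) % 2 := by omega
  unfold eps
  rw [neg_one_pow_eq_pow_mod_two]
  simp only []
  rw [hm, ← neg_one_pow_eq_pow_mod_two, pow_succ, mul_neg_one]

lemma eps_sub_fst (h2 : 2 ∣ L) (h1 : 1 < L) (a b : ZMod L) :
    eps L (a - 1, b) = - eps L (a, b) := by
  have h := eps_add_fst h2 h1 (a - 1) b
  rw [sub_add_cancel] at h
  linarith

lemma eps_sub_snd (h2 : 2 ∣ L) (h1 : 1 < L) (a b : ZMod L) :
    eps L (a, b - 1) = - eps L (a, b) := by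
  have h := eps_add_snd h2 h1 a (b - 1)
  rw [sub_add_cancel] at h
  linarith

lemma eps_neighbor (h2 : 2 ∣ L) (h1 : 1 < L) {i j : ZMod L × ZMod L}
    (h : j = (i.1 + 1, i.2) ∨ j = (i.1 - 1, i.2) ∨ j = (i.1, i.2 + 1) ∨ j = (i.1, i.2 - 1)) :
    eps L j = - eps L i := by
  have hi : (i.1, i.2) = i := rfl
  rcases h with rfl | rfl | rfl | rfl
  · rw [eps_add_fst h2 h1, hi]
  · rw [eps_sub_fst h2 h1, hi]
  · rw [eps_add_snd h2 h1, hi]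
  · rw [eps_sub_snd h2 h1, hi]



lemma one_ne_zero' (h1 : 1 < L) : (1 : ZMod L) ≠ 0 := by
  haveI := Fact.mk h1
  exact one_ne_zero

/-- swap of the horizontal-neighbour condition -/
lemma swapH {i j : ZMod L × ZMod L} :
    (i = (j.1 + 1, j.2) ∨ i = (j.1 - 1, j.2)) ↔ (j = (i.1 + 1, i.2) ∨ j = (i.1 - 1, i.2)) := by
  constructor
  · rintro (rfl | rfl)
    · right; simp
    · left; simp
  · rintro (rfl | rfl)
    · right; simp
    · left; simp

lemma swapV {i j : ZMod L × ZMod L} :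
    (i = (j.1, j.2 + 1) ∨ i = (j.1, j.2 - 1)) ↔ (j = (i.1, i.2 + 1) ∨ j = (i.1, i.2 - 1)) := by
  constructor
  · rintro (rfl | rfl)
    · right; simp
    · left; simp
  · rintro (rfl | rfl)
    · right; simp
    · left; simp

/-- vertical neighbours are not horizontal neighbours -/
lemma disjHV (h1 : 1 < L) {i j : ZMod L × ZMod L}
    (hv : j = (i.1, i.2 + 1) ∨ j = (i.1, i.2 - 1)) :
    ¬ (j = (i.1 + 1, i.2) ∨ j = (i.1 - 1, i.2)) := by
  have h10 := one_ne_zero' h1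
  rintro (h | h) <;> rcases hv with rfl | rfl <;>
    simp only [Prod.mk.injEq] at h
  · exact h10 (left_eq_add.mp h.2.symm)
  · exact h10 (sub_eq_self.mp h.2)
  · exact h10 (left_eq_add.mp h.2.symm)
  · exact h10 (sub_eq_self.mp h.2)

lemma piFluxM_isSymm (h1 : 1 < L) (t m : ℝ) : (piFluxM L t m).IsSymm := by
  unfold Matrix.IsSymm
  ext i j
  rw [Matrix.transpose_apply]
  show piFluxM L t m j i = piFluxM L t m i j
  by_cases hd : j = i
  · subst hd; rfl
  · have hd' : ¬ i = j := fun h => hd h.symm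
    by_cases hh : j = (i.1 + 1, i.2) ∨ j = (i.1 - 1, i.2)
    · have hh' : i = (j.1 + 1, j.2) ∨ i = (j.1 - 1, j.2) := by
        rcases hh with rfl | rfl
        · right; simp
        · left; simp
      have h2 : j.2 = i.2 := by rcases hh with rfl | rfl <;> rfl
      simp only [piFluxM]
      rw [if_neg hd', if_pos hh', if_neg hd, if_pos hh, h2]
    · by_cases hv : j = (i.1, i.2 + 1) ∨ j = (i.1, i.2 - 1)
      · have hv' : i = (j.1, j.2 + 1) ∨ i = (j.1, j.2 - 1) := by
          rcases hv with rfl | rfl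
          · right; simp
          · left; simp
        have hh'' : ¬ (i = (j.1 + 1, j.2) ∨ i = (j.1 - 1, j.2)) := disjHV h1 hv'
        simp only [piFluxM]
        rw [if_neg hd', if_neg hh'', if_pos hv', if_neg hd, if_neg hh, if_pos hv]
      · have hh'' : ¬ (i = (j.1 + 1, j.2) ∨ i = (j.1 - 1, j.2)) := fun h => hh (swapH.mp h)
        have hv'' : ¬ (i = (j.1, j.2 + 1) ∨ i = (j.1, j.2 - 1)) := fun h => hv (swapV.mp h)
        simp only [piFluxM]
        rw [if_neg hd', if_neg hh'', if_neg hv'', if_neg hd, if_neg hh, if_neg hv]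


variable [NeZero L]

lemma split (t m : ℝ) :
    piFluxM L t m = m • Matrix.diagonal (eps L) + piFluxM L t 0 := by
  funext i j
  simp only [Matrix.add_apply, Matrix.smul_apply, smul_eq_mul]
  by_cases hd : j = i
  · subst hd
    show piFluxM L t m j j = _ + piFluxM L t 0 j j
    simp [piFluxM, Matrix.diagonal_apply_eq, eps]
  · show piFluxM L t m i j = _ + piFluxM L t 0 i j
    simp only [piFluxM, if_neg hd, Matrix.diagonal_apply_ne _ (Ne.symm hd), mul_zero, zero_add]

lemma anticomm (h2 : 2 ∣ L) (h1 : 1 < L) (t : ℝ) :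
    Matrix.diagonal (eps L) * piFluxM L t 0 + piFluxM L t 0 * Matrix.diagonal (eps L) = 0 := by
  ext i j
  rw [Matrix.add_apply, Matrix.diagonal_mul, Matrix.mul_diagonal, Matrix.zero_apply]
  by_cases hd : j = i
  · subst hd
    have : piFluxM L t 0 j j = 0 := by simp [piFluxM]
    rw [this]; ring
  · by_cases hh : j = (i.1 + 1, i.2) ∨ j = (i.1 - 1, i.2)
    · have he : eps L j = - eps L i := eps_neighbor h2 h1 (by tauto)
      rw [he]; ring
    · by_cases hv : j = (i.1, i.2 + 1) ∨ j = (i.1, i.2 - 1)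
      · have he : eps L j = - eps L i := eps_neighbor h2 h1 (by tauto)
        rw [he]; ring
      · have : piFluxM L t 0 i j = 0 := by
          simp only [piFluxM, if_neg hd, if_neg hh, if_neg hv]
        rw [this]; ring

lemma diag_sq : Matrix.diagonal (eps L) * Matrix.diagonal (eps L)
    = (1 : Matrix (ZMod L × ZMod L) (ZMod L × ZMod L) ℝ) := by
  rw [Matrix.diagonal_mul_diagonal]
  have : (fun i => eps L i * eps L i) = fun _ : ZMod L × ZMod L => (1 : ℝ) :=
    funext fun i => eps_sq i
  rw [this, Matrix.diagonal_one]

lemma sq_eq (h2 : 2 ∣ L) (h1 : 1 < L) (t m : ℝ) :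
    piFluxM L t m * piFluxM L t m
      = m ^ 2 • (1 : Matrix (ZMod L × ZMod L) (ZMod L × ZMod L) ℝ)
        + piFluxM L t 0 * piFluxM L t 0 := by
  set D := Matrix.diagonal (eps L) with hD
  set T := piFluxM L t 0 with hT
  have expand : (m • D + T) * (m • D + T)
      = (m * m) • (D * D) + (m • (D * T + T * D) + T * T) := by
    simp only [add_mul, mul_add, smul_mul_assoc, mul_smul_comm, smul_add, smul_smul]
    abel
  rw [split t m, expand, diag_sq, anticomm h2 h1 t, smul_zero, zero_add, pow_two]


lemma gap (h2 : 2 ∣ L) (h1 : 1 < L) {t m lam : ℝ} (hm : 0 < m)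
    (h : Module.End.HasEigenvalue (Matrix.toLin' (piFluxM L t m)) lam) : m ≤ |lam| := by
  obtain ⟨v, hv⟩ := h.exists_hasEigenvector
  have hv0 : v ≠ 0 := hv.2
  have hMv : piFluxM L t m *ᵥ v = lam • v := by
    have h' := hv.apply_eq_smul
    rwa [Matrix.toLin'_apply] at h'
  set T := piFluxM L t 0 with hT
  have hTsymm : Tᵀ = T := piFluxM_isSymm h1 t 0
  have hkey := congrArg (fun B : Matrix (ZMod L × ZMod L) (ZMod L × ZMod L) ℝ =>
    dotProduct v (B *ᵥ v)) (sq_eq h2 h1 t m)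
  simp only [← Matrix.mulVec_mulVec, hMv, Matrix.mulVec_smul, Matrix.add_mulVec,
    Matrix.smul_mulVec, Matrix.one_mulVec, dotProduct_add,
    dotProduct_smul, smul_eq_mul, smul_smul] at hkey
  rw [dotProduct_mulVec v T (T *ᵥ v), ← Matrix.mulVec_transpose T v, hTsymm] at hkey
  set w := T *ᵥ v with hw'
  have hw : 0 ≤ w ⬝ᵥ w := Finset.sum_nonneg fun i _ => mul_self_nonneg _
  have hvv : 0 < v ⬝ᵥ v := by
    obtain ⟨i, hi⟩ := Function.ne_iff.mp hv0
    exact Finset.sum_pos' (fun i _ => mul_self_nonneg _)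
      ⟨i, Finset.mem_univ i, mul_self_pos.mpr hi⟩
  have hsq : m ^ 2 ≤ lam ^ 2 := by nlinarith [hkey, hw, hvv]
  nlinarith [abs_nonneg lam, sq_abs lam, hm, hsq]


lemma shift_entry (h2 : 2 ∣ L) (h1 : 1 < L) (t m : ℝ) (i j : ZMod L × ZMod L) :
    eps L i * piFluxM L t m (i.1 + 1, i.2) (j.1 + 1, j.2) * eps L j
      = -(piFluxM L t m i j) := by
  have h10 := one_ne_zero' h1
  by_cases hd : j = i
  · subst hd
    have hAii : piFluxM L t m (j.1 + 1, j.2) (j.1 + 1, j.2) = m * eps L (j.1 + 1, j.2) := by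
      simp [piFluxM, eps]
    have hAjj : piFluxM L t m j j = m * eps L j := by simp [piFluxM, eps]
    rw [hAii, hAjj, eps_add_fst h2 h1]
    have hjj : eps L (j.1, j.2) = eps L j := rfl
    rw [hjj]
    linear_combination (-(m * eps L j)) * eps_sq (L := L) j
  · have hd1 : ¬ ((j.1 + 1, j.2) : ZMod L × ZMod L) = (i.1 + 1, i.2) := by
      intro h
      simp only [Prod.mk.injEq, add_left_inj] at h
      exact hd (Prod.ext h.1 h.2)
    by_cases hh : j = (i.1 + 1, i.2) ∨ j = (i.1 - 1, i.2)
    · have hh1 : ((j.1 + 1, j.2) : ZMod L × ZMod L) = (i.1 + 1 + 1, i.2)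
          ∨ ((j.1 + 1, j.2) : ZMod L × ZMod L) = (i.1 + 1 - 1, i.2) := by
        rcases hh with rfl | rfl
        · left; rfl
        · right
          show ((i.1 - 1) + 1, i.2) = (i.1 + 1 - 1, i.2)
          rw [sub_add_cancel, add_sub_cancel_right]
      have he : eps L j = - eps L i := eps_neighbor h2 h1 (by tauto)
      have hv' : piFluxM L t m (i.1 + 1, i.2) (j.1 + 1, j.2) = -t * (-1) ^ (i.2.val) := by
        simp only [piFluxM, if_neg hd1, if_pos hh1]
      have hv2 : piFluxM L t m i j = -t * (-1) ^ (i.2.val) := by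
        simp only [piFluxM, if_neg hd, if_pos hh]
      rw [hv', hv2, he]
      linear_combination (t * (-1) ^ i.2.val) * eps_sq (L := L) i
    · by_cases hv : j = (i.1, i.2 + 1) ∨ j = (i.1, i.2 - 1)
      · have hh1 : ¬ (((j.1 + 1, j.2) : ZMod L × ZMod L) = (i.1 + 1 + 1, i.2)
            ∨ ((j.1 + 1, j.2) : ZMod L × ZMod L) = (i.1 + 1 - 1, i.2)) := by
          rintro (h | h) <;> rcases hv with rfl | rfl <;> simp only [Prod.mk.injEq] at h
          · exact h10 (add_eq_left.mp h.2)
          · exact h10 (sub_eq_self.mp h.2)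
          · exact h10 (add_eq_left.mp h.2)
          · exact h10 (sub_eq_self.mp h.2)
        have hv1 : ((j.1 + 1, j.2) : ZMod L × ZMod L) = (i.1 + 1, i.2 + 1)
            ∨ ((j.1 + 1, j.2) : ZMod L × ZMod L) = (i.1 + 1, i.2 - 1) := by
          rcases hv with rfl | rfl
          · left; rfl
          · right; rfl
        have he : eps L j = - eps L i := eps_neighbor h2 h1 (by tauto)
        have hv' : piFluxM L t m (i.1 + 1, i.2) (j.1 + 1, j.2) = -t := by
          simp only [piFluxM, if_neg hd1, if_neg hh1, if_pos hv1]
        have hv2 : piFluxM L t m i j = -t := by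
          simp only [piFluxM, if_neg hd, if_neg hh, if_pos hv]
        rw [hv', hv2, he]
        linear_combination t * eps_sq (L := L) i
      · have hh1 : ¬ (((j.1 + 1, j.2) : ZMod L × ZMod L) = (i.1 + 1 + 1, i.2)
            ∨ ((j.1 + 1, j.2) : ZMod L × ZMod L) = (i.1 + 1 - 1, i.2)) := by
          rintro (h | h) <;> apply hh <;> simp only [Prod.mk.injEq, add_left_inj] at h
          · left; exact Prod.ext h.1 h.2
          · right
            refine Prod.ext ?_ h.2
            have := h.1
            linear_combination this
        have hv1 : ¬ (((j.1 + 1, j.2) : ZMod L × ZMod L) = (i.1 + 1, i.2 + 1)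
            ∨ ((j.1 + 1, j.2) : ZMod L × ZMod L) = (i.1 + 1, i.2 - 1)) := by
          rintro (h | h) <;> apply hv <;> simp only [Prod.mk.injEq, add_left_inj] at h
          · left; exact Prod.ext h.1 h.2
          · right; exact Prod.ext h.1 h.2
        have hz1 : piFluxM L t m (i.1 + 1, i.2) (j.1 + 1, j.2) = 0 := by
          simp only [piFluxM, if_neg hd1, if_neg hh1, if_neg hv1]
        have hz2 : piFluxM L t m i j = 0 := by
          simp only [piFluxM, if_neg hd, if_neg hh, if_neg hv]
        rw [hz1, hz2]; ring


section Generic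
variable {n : Type*} [Fintype n] [DecidableEq n]

lemma charpoly_conj (P A Q : Matrix n n ℝ) (h : P * Q = 1) :
    (P * A * Q).charpoly = A.charpoly := by
  unfold Matrix.charpoly
  have hcomm : (C : ℝ →+* ℝ[X]).mapMatrix P * Matrix.scalar n X
      = Matrix.scalar n X * (C : ℝ →+* ℝ[X]).mapMatrix P :=
    ((Matrix.scalar_commute (X : ℝ[X]) (Commute.all _) _)).symm.eq
  have hcm : Matrix.charmatrix (P * A * Q)
      = (C : ℝ →+* ℝ[X]).mapMatrix P * Matrix.charmatrix A
        * (C : ℝ →+* ℝ[X]).mapMatrix Q := by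
    unfold Matrix.charmatrix
    rw [mul_sub, sub_mul]
    congr 1
    · rw [hcomm, mul_assoc, ← _root_.map_mul, h, _root_.map_one, mul_one]
    · rw [_root_.map_mul, _root_.map_mul]
  rw [hcm, Matrix.det_mul, Matrix.det_mul]
  have hd : ((C : ℝ →+* ℝ[X]).mapMatrix P).det * ((C : ℝ →+* ℝ[X]).mapMatrix Q).det = 1 := by
    rw [← Matrix.det_mul, ← _root_.map_mul, h, _root_.map_one, Matrix.det_one]
  calc ((C : ℝ →+* ℝ[X]).mapMatrix P).det * (Matrix.charmatrix A).det
        * ((C : ℝ →+* ℝ[X]).mapMatrix Q).det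
      = (Matrix.charmatrix A).det
        * (((C : ℝ →+* ℝ[X]).mapMatrix P).det * ((C : ℝ →+* ℝ[X]).mapMatrix Q).det) := by ring
    _ = (Matrix.charmatrix A).det := by rw [hd, mul_one]

lemma charpoly_comp_neg (B : Matrix n n ℝ) :
    (Matrix.charpoly B).comp (-X) = (-1 : ℝ[X]) ^ (Fintype.card n) * Matrix.charpoly (-B) := by
  have h1 : (Matrix.charpoly B).comp (-X)
      = Polynomial.eval₂RingHom (Polynomial.C : ℝ →+* ℝ[X]) (-X) (Matrix.charpoly B) := rfl
  rw [h1]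
  unfold Matrix.charpoly
  rw [RingHom.map_det]
  have hmap : (Polynomial.eval₂RingHom (Polynomial.C : ℝ →+* ℝ[X]) (-X)).mapMatrix
        (Matrix.charmatrix B)
      = - Matrix.charmatrix (-B) := by
    ext i j
    rw [RingHom.mapMatrix_apply, Matrix.map_apply, Matrix.neg_apply]
    by_cases hij : i = j
    · subst hij
      rw [Matrix.charmatrix_apply_eq, Matrix.charmatrix_apply_eq]
      simp [Matrix.neg_apply]
      ring
    · rw [Matrix.charmatrix_apply_ne _ _ _ hij, Matrix.charmatrix_apply_ne _ _ _ hij]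
      simp [Matrix.neg_apply]
  rw [hmap, Matrix.det_neg]

lemma charpoly_diag (d : n → ℝ) :
    (Matrix.diagonal d).charpoly = ∏ i, (X - C (d i)) := by
  unfold Matrix.charpoly
  have hcm : Matrix.charmatrix (Matrix.diagonal d)
      = Matrix.diagonal (fun i => (X : ℝ[X]) - C (d i)) := by
    ext i j
    by_cases hij : i = j
    · subst hij
      rw [Matrix.charmatrix_apply_eq, Matrix.diagonal_apply_eq, Matrix.diagonal_apply_eq]
    · rw [Matrix.charmatrix_apply_ne _ _ _ hij, Matrix.diagonal_apply_ne _ hij,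
        Matrix.diagonal_apply_ne _ hij, map_zero, neg_zero]
  rw [hcm, Matrix.det_diagonal]

lemma comp_neg_ne_zero {q : ℝ[X]} (hq : q ≠ 0) : q.comp (-X) ≠ 0 := by
  intro h0
  apply hq
  have hcc : (q.comp (-X)).comp (-X) = q := by
    rw [Polynomial.comp_assoc]; simp
  rw [h0] at hcc
  simpa using hcc.symm

lemma rootMultiplicity_comp_neg_le {q : ℝ[X]} (hq : q ≠ 0) (a : ℝ) :
    rootMultiplicity (-a) q ≤ rootMultiplicity a (q.comp (-X)) := by
  rw [Polynomial.le_rootMultiplicity_iff (comp_neg_ne_zero hq)]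
  obtain ⟨c, hc⟩ := Polynomial.pow_rootMultiplicity_dvd q (-a)
  refine ⟨(-1) ^ (rootMultiplicity (-a) q) * c.comp (-X), ?_⟩
  calc q.comp (-X) = ((X - C (-a)) ^ (rootMultiplicity (-a) q) * c).comp (-X) := by rw [← hc]
    _ = ((X - C (-a)).comp (-X)) ^ (rootMultiplicity (-a) q) * c.comp (-X) := by
        rw [Polynomial.mul_comp, Polynomial.pow_comp]
    _ = (-(X - C a)) ^ (rootMultiplicity (-a) q) * c.comp (-X) := by
        rw [Polynomial.sub_comp, Polynomial.X_comp, Polynomial.C_comp, map_neg]; ring_nf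
    _ = (X - C a) ^ (rootMultiplicity (-a) q)
        * ((-1) ^ (rootMultiplicity (-a) q) * c.comp (-X)) := by rw [neg_pow]; ring

lemma rootMultiplicity_comp_neg {q : ℝ[X]} (hq : q ≠ 0) (a : ℝ) :
    rootMultiplicity a (q.comp (-X)) = rootMultiplicity (-a) q := by
  refine le_antisymm ?_ (rootMultiplicity_comp_neg_le hq a)
  have h := rootMultiplicity_comp_neg_le (comp_neg_ne_zero hq) (-a)
  have hcc : (q.comp (-X)).comp (-X) = q := by rw [Polynomial.comp_assoc]; simp
  rw [neg_neg, hcc] at h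
  exact h

lemma hasEigenvalue_eigenvalues {A : Matrix n n ℝ} (hA : A.IsHermitian) (i : n) :
    Module.End.HasEigenvalue (Matrix.toLin' A) (hA.eigenvalues i) := by
  refine Module.End.hasEigenvalue_of_hasEigenvector (x := ⇑(hA.eigenvectorBasis i)) ⟨?_, ?_⟩
  · rw [Module.End.mem_eigenspace_iff, Matrix.toLin'_apply, hA.mulVec_eigenvectorBasis]
  · intro hz
    exact hA.eigenvectorBasis.orthonormal.ne_zero i (by ext j; exact congrFun hz j)


end Generic

lemma charpoly_neg_eq (h2 : 2 ∣ L) (h1 : 1 < L) (t m : ℝ) :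
    (-(piFluxM L t m)).charpoly = (piFluxM L t m).charpoly := by
  set A := piFluxM L t m with hA
  set e : (ZMod L × ZMod L) ≃ (ZMod L × ZMod L) :=
    Equiv.addRight (((1 : ZMod L), (0 : ZMod L))) with he
  have hsim : Matrix.diagonal (eps L) * (A.submatrix e e) * Matrix.diagonal (eps L) = -A := by
    ext i j
    rw [Matrix.mul_diagonal, Matrix.diagonal_mul, Matrix.submatrix_apply, Matrix.neg_apply]
    have hei : e i = (i.1 + 1, i.2) := by
      show i + ((1 : ZMod L), (0 : ZMod L)) = (i.1 + 1, i.2)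
      exact Prod.ext rfl (add_zero i.2)
    have hej : e j = (j.1 + 1, j.2) := by
      show j + ((1 : ZMod L), (0 : ZMod L)) = (j.1 + 1, j.2)
      exact Prod.ext rfl (add_zero j.2)
    rw [hei, hej]
    exact shift_entry h2 h1 t m i j
  calc (-A).charpoly
      = (Matrix.diagonal (eps L) * (A.submatrix e e) * Matrix.diagonal (eps L)).charpoly := by
        rw [hsim]
    _ = (A.submatrix e e).charpoly := charpoly_conj _ _ _ diag_sq
    _ = A.charpoly := by
        have hre : A.submatrix (⇑e) (⇑e) = Matrix.reindex e.symm e.symm A := by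
          rw [Matrix.reindex_apply]
          simp
        rw [hre, Matrix.charpoly_reindex]

end PiFluxAux


/-- For `L` a positive multiple of 4 and `t, m > 0`, the one-body π-flux Hamiltonian is
symmetric, every one of its eigenvalues `λ` satisfies `|λ| ≥ m` (a spectral gap of width
`2m` around zero), and exactly `L²/2` of its `L²` eigenvalues (counted with multiplicity)
are negative — so at `U = 0` the many-body π-flux ground state with holonomies `(1,1)` is
unique and sits at half-filling. -/
theorem piFluxM_gap_half_filling (L : ℕ) [NeZero L] (hL : 4 ∣ L) (t m : ℝ)
    (ht : 0 < t) (hm : 0 < m) :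
    (piFluxM L t m).IsSymm ∧
    (∀ lam : ℝ, Module.End.HasEigenvalue (Matrix.toLin' (piFluxM L t m)) lam → m ≤ |lam|) ∧
    Multiset.card ((piFluxM L t m).charpoly.roots.filter (fun x => x < 0)) = L ^ 2 / 2 := by
  classical
  have hLpos : 0 < L := Nat.pos_of_ne_zero (NeZero.ne L)
  have hL4 : 4 ≤ L := Nat.le_of_dvd hLpos hL
  have h1 : 1 < L := by omega
  have h2 : 2 ∣ L := dvd_trans (by norm_num) hL
  set A := piFluxM L t m with hA
  have hsymm : A.IsSymm := PiFluxAux.piFluxM_isSymm h1 t m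
  have hgap : ∀ lam : ℝ, Module.End.HasEigenvalue (Matrix.toLin' A) lam → m ≤ |lam| :=
    fun lam h => PiFluxAux.gap h2 h1 hm h
  refine ⟨hsymm, hgap, ?_⟩
  have hherm : A.IsHermitian := by
    rw [Matrix.IsHermitian, Matrix.conjTranspose_eq_transpose_of_trivial]
    exact hsymm
  set p := A.charpoly with hp'
  have hunit : (hherm.eigenvectorUnitary : Matrix (ZMod L × ZMod L) (ZMod L × ZMod L) ℝ)
      * (star (hherm.eigenvectorUnitary : Matrix (ZMod L × ZMod L) (ZMod L × ZMod L) ℝ)) = 1 :=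
    (Matrix.mem_unitaryGroup_iff).mp hherm.eigenvectorUnitary.2
  have hco : (RCLike.ofReal ∘ hherm.eigenvalues : (ZMod L × ZMod L) → ℝ) = hherm.eigenvalues := by
    funext i; simp
  have hdiag : p = (Matrix.diagonal hherm.eigenvalues).charpoly := by
    calc p = A.charpoly := rfl
      _ = ((hherm.eigenvectorUnitary : Matrix (ZMod L × ZMod L) (ZMod L × ZMod L) ℝ)
            * Matrix.diagonal (RCLike.ofReal ∘ hherm.eigenvalues)
            * (star (hherm.eigenvectorUnitary :
                Matrix (ZMod L × ZMod L) (ZMod L × ZMod L) ℝ))).charpoly := by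
          conv_lhs => rw [hherm.spectral_theorem, Unitary.conjStarAlgAut_apply]
      _ = (Matrix.diagonal (RCLike.ofReal ∘ hherm.eigenvalues)).charpoly :=
          PiFluxAux.charpoly_conj _ _ _ hunit
      _ = (Matrix.diagonal hherm.eigenvalues).charpoly := by rw [hco]
  have hprod : p = ∏ i : (ZMod L × ZMod L), (Polynomial.X - Polynomial.C (hherm.eigenvalues i)) := by
    rw [hdiag]; exact PiFluxAux.charpoly_diag _
  have hroots : p.roots = Finset.univ.val.map hherm.eigenvalues := by
    rw [hprod, Finset.prod_eq_multiset_prod]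
    have hmm : Multiset.map (fun i => Polynomial.X - Polynomial.C (hherm.eigenvalues i))
          Finset.univ.val
        = Multiset.map (fun a : ℝ => Polynomial.X - Polynomial.C a)
            (Multiset.map hherm.eigenvalues Finset.univ.val) := by
      rw [Multiset.map_map]
      simp [Function.comp]
    rw [hmm]
    exact Polynomial.roots_multiset_prod_X_sub_C _
  have hcardn : Fintype.card (ZMod L × ZMod L) = L ^ 2 := by
    rw [Fintype.card_prod, ZMod.card, sq]
  have hcard : Multiset.card p.roots = L ^ 2 := by
    rw [hroots, Multiset.card_map, ← hcardn]
    rfl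
  have hp0 : p ≠ 0 := (Matrix.charpoly_monic A).ne_zero
  have hNeven : Even (Fintype.card (ZMod L × ZMod L)) := by
    rw [hcardn]
    exact (Nat.even_pow' (by norm_num)).mpr (Nat.even_iff.mpr (by omega))
  have hcompeq : p.comp (-Polynomial.X) = p := by
    rw [PiFluxAux.charpoly_comp_neg A, hNeven.neg_one_pow, one_mul,
      PiFluxAux.charpoly_neg_eq h2 h1 t m]
  have hcount : ∀ a : ℝ, p.roots.count a = p.roots.count (-a) := by
    intro a
    rw [Polynomial.count_roots, Polynomial.count_roots]
    conv_lhs => rw [← hcompeq]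
    exact PiFluxAux.rootMultiplicity_comp_neg hp0 a
  have hmapneg : p.roots.map (fun x : ℝ => -x) = p.roots := by
    refine Multiset.ext.mpr fun a => ?_
    calc (p.roots.map (fun x : ℝ => -x)).count a
        = (p.roots.map (fun x : ℝ => -x)).count (-(-a)) := by rw [neg_neg]
      _ = p.roots.count (-a) := Multiset.count_map_eq_count' _ _ neg_injective _
      _ = p.roots.count a := (hcount a).symm
  have h0 : (0 : ℝ) ∉ p.roots := by
    intro h0mem
    rw [hroots] at h0mem
    obtain ⟨i, _, hi⟩ := Multiset.mem_map.mp h0mem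
    have hge := hgap 0 (hi ▸ PiFluxAux.hasEigenvalue_eigenvalues hherm i)
    simp only [abs_zero] at hge
    linarith
  have hfilter : Multiset.card (p.roots.filter (fun x => x < 0))
      = Multiset.card (p.roots.filter (fun x => 0 < x)) := by
    conv_lhs => rw [← hmapneg]
    rw [Multiset.filter_map, Multiset.card_map]
    congr 1
    apply Multiset.filter_congr
    intro x _
    simp [Function.comp]
  have hsplit2 : p.roots.filter (fun x => ¬ x < 0) = p.roots.filter (fun x => 0 < x) := by
    apply Multiset.filter_congr
    intro x hx
    constructor
    · intro hnl
      rcases lt_or_eq_of_le (not_lt.mp hnl) with h | h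
      · exact h
      · exact absurd (h ▸ hx) h0
    · exact fun h => not_lt.mpr h.le
  have htot : Multiset.card (p.roots.filter (fun x => x < 0))
      + Multiset.card (p.roots.filter (fun x => 0 < x)) = L ^ 2 := by
    rw [← hsplit2, ← Multiset.card_add, Multiset.filter_add_not, hcard]
  omega
end

section
/- Let L ≥ 2 and let D be the ℤ₂-coboundary map of the torus lattice (ZMod L)². A configuration σ : ε → ZMod 2 lies in the range of D if and only if (i) Flux σ i = 0 for every i ∈ V, (ii) hol₁ σ = 0, and (iii) hol₂ σ = 0. That is, two ℤ₂-gauge-field backgrounds are gauge equivalent if and only if they have the same flux through every plaquette and the same holonomies around the two non-contractible cycles of the torus. -/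
section Aux
variable {L : ℕ} [NeZero L]

private lemma telescope2 (g : ℕ → ZMod 2) (n : ℕ) :
    ∑ k ∈ Finset.range n, (g k + g (k+1)) = g 0 + g n := by
  induction n with
  | zero => simp [CharTwo.add_self_eq_zero]
  | succ n ih =>
      rw [Finset.sum_range_succ, ih]
      have h : g n + g n = 0 := CharTwo.add_self_eq_zero _
      linear_combination h

private lemma sum_univ_zmod (g : ZMod L → ZMod 2) :
    ∑ x : ZMod L, g x = ∑ k ∈ Finset.range L, g (k : ℕ) := by
  refine Finset.sum_nbij' (i := fun x => x.val) (j := fun k => (k : ZMod L)) ?_ ?_ ?_ ?_ ?_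
  · intro x _; exact Finset.mem_range.mpr (ZMod.val_lt x)
  · intro k _; exact Finset.mem_univ _
  · intro x _; exact ZMod.natCast_rightInverse x
  · intro k hk; exact ZMod.val_natCast_of_lt (Finset.mem_range.mp hk)
  · intro x _; rw [ZMod.natCast_rightInverse x]

private lemma val_succ_cases (hL : 2 ≤ L) (y : ZMod L) :
    (y+1).val = y.val + 1 ∨ (y.val = L - 1 ∧ (y+1).val = 0) := by
  have h1 : (1 : ZMod L).val = 1 := by
    rw [ZMod.val_one_eq_one_mod, Nat.mod_eq_of_lt hL]
  rcases Nat.lt_or_ge (y.val + 1) L with hlt | hge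
  · left; rw [ZMod.val_add_of_lt (by omega)]; omega
  · right
    have := ZMod.val_lt y
    have hy : y.val = L - 1 := by omega
    refine ⟨hy, ?_⟩
    have hz : y + 1 = 0 := by
      have h0 : (y.val : ZMod L) + 1 = 0 := by
        rw [hy]
        have hc : ((L - 1 : ℕ) : ZMod L) + 1 = ((L : ℕ) : ZMod L) := by
          rw [Nat.cast_sub (by omega : 1 ≤ L)]; push_cast; ring
        rw [hc, ZMod.natCast_self]
      rwa [ZMod.natCast_rightInverse y] at h0
    rw [hz, ZMod.val_zero]

private lemma partial_step (hL : 2 ≤ L) (g : ZMod L → ZMod 2)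
    (h : ∑ x : ZMod L, g x = 0) (y : ZMod L) :
    (∑ k ∈ Finset.range y.val, g (k : ℕ)) + (∑ k ∈ Finset.range (y+1).val, g (k : ℕ))
      = g y := by
  rcases val_succ_cases hL y with hv | ⟨hy, hv⟩
  · rw [hv, Finset.sum_range_succ, ZMod.natCast_rightInverse y]
    have h2 := CharTwo.add_self_eq_zero (∑ k ∈ Finset.range y.val, g (k : ℕ))
    linear_combination h2
  · rw [hv, hy, Finset.sum_range_zero, add_zero]
    have htot : ∑ k ∈ Finset.range L, g (k : ℕ) = 0 := by rw [← sum_univ_zmod]; exact h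
    have hL1 : L - 1 + 1 = L := by omega
    have htot' : (∑ k ∈ Finset.range (L - 1), g (k : ℕ)) + g ((L - 1 : ℕ) : ZMod L) = 0 := by
      rw [← Finset.sum_range_succ, hL1]; exact htot
    have hcy : ((L - 1 : ℕ) : ZMod L) = y := by
      rw [← hy]; exact ZMod.natCast_rightInverse y
    rw [hcy] at htot'
    have h2 := CharTwo.add_self_eq_zero (g y)
    linear_combination htot' - h2

end Aux


/-- The ℤ₂-coboundary map of the `L × L` torus lattice: vertices are `(ZMod L)²`, and an
edge is a pair `(i, b)` with `b = true` the horizontal edge from `i` to `i + (1,0)` and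
`b = false` the vertical edge from `i` to `i + (0,1)`. -/
def coboundary (L : ℕ) (f : ZMod L × ZMod L → ZMod 2) :
    (ZMod L × ZMod L) × Bool → ZMod 2 := fun e =>
  if e.2 then f e.1 + f (e.1.1 + 1, e.1.2) else f e.1 + f (e.1.1, e.1.2 + 1)

/-- The ℤ₂-flux of a configuration `σ` through the plaquette based at vertex `i`. -/
def plaqFlux (L : ℕ) (σ : (ZMod L × ZMod L) × Bool → ZMod 2)
    (i : ZMod L × ZMod L) : ZMod 2 :=
  σ (i, true) + σ ((i.1, i.2 + 1), true) + σ (i, false) + σ ((i.1 + 1, i.2), false)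

/-- Holonomy of a configuration along a horizontal non-contractible cycle. -/
def hol₁ (L : ℕ) [NeZero L] (σ : (ZMod L × ZMod L) × Bool → ZMod 2) : ZMod 2 :=
  ∑ a : ZMod L, σ ((a, 0), true)

/-- Holonomy of a configuration along a vertical non-contractible cycle. -/
def hol₂ (L : ℕ) [NeZero L] (σ : (ZMod L × ZMod L) × Bool → ZMod 2) : ZMod 2 :=
  ∑ b : ZMod L, σ ((0, b), false)

/-- A ℤ₂-gauge-field configuration on the torus is a coboundary iff it has vanishing flux
through every plaquette and vanishing holonomy along both non-contractible cycles; i.e.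
two backgrounds are gauge equivalent iff they carry the same fluxes and holonomies. -/
theorem mem_range_coboundary_iff (L : ℕ) [NeZero L] (hL : 2 ≤ L)
    (σ : (ZMod L × ZMod L) × Bool → ZMod 2) :
    σ ∈ Set.range (coboundary L) ↔
      (∀ i : ZMod L × ZMod L, plaqFlux L σ i = 0) ∧ hol₁ L σ = 0 ∧ hol₂ L σ = 0 := by
  constructor
  · rintro ⟨f, rfl⟩
    refine ⟨?_, ?_, ?_⟩
    · intro i
      simp only [plaqFlux, coboundary, Bool.false_eq_true, if_false, if_true]
      have key : ∀ a b c d : ZMod 2, (a + b) + (c + d) + (a + c) + (b + d) = 0 := by decide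
      exact key _ _ _ _
    · simp only [hol₁, coboundary, Bool.false_eq_true, if_false, if_true]
      rw [Finset.sum_add_distrib]
      have : ∑ a : ZMod L, f (a + 1, 0) = ∑ a : ZMod L, f (a, 0) :=
        Fintype.sum_equiv (Equiv.addRight 1) _ _ (fun a => rfl)
      rw [this]; exact CharTwo.add_self_eq_zero _
    · simp only [hol₂, coboundary, Bool.false_eq_true, if_false, if_true]
      rw [Finset.sum_add_distrib]
      have : ∑ b : ZMod L, f (0, b + 1) = ∑ b : ZMod L, f (0, b) :=
        Fintype.sum_equiv (Equiv.addRight 1) _ _ (fun b => rfl)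
      rw [this]; exact CharTwo.add_self_eq_zero _
  · rintro ⟨hflux, h1, h2⟩
    -- column sums all vanish
    have colstep : ∀ x : ZMod L, ∑ b : ZMod L, σ ((x + 1, b), false)
        = ∑ b : ZMod L, σ ((x, b), false) := by
      intro x
      have hsum : ∑ b : ZMod L, plaqFlux L σ (x, b) = 0 := by
        simp [hflux]
      simp only [plaqFlux] at hsum
      rw [Finset.sum_add_distrib, Finset.sum_add_distrib, Finset.sum_add_distrib] at hsum
      have hshift : ∑ b : ZMod L, σ ((x, b + 1), true) = ∑ b : ZMod L, σ ((x, b), true) :=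
        Fintype.sum_equiv (Equiv.addRight 1) _ _ (fun b => rfl)
      rw [hshift] at hsum
      have hself := CharTwo.add_self_eq_zero (∑ b : ZMod L, σ ((x, b), true))
      have hself2 := CharTwo.add_self_eq_zero (∑ b : ZMod L, σ ((x, b), false))
      linear_combination hsum - hself - hself2
    have col : ∀ x : ZMod L, ∑ b : ZMod L, σ ((x, b), false) = 0 := by
      have colnat : ∀ n : ℕ, ∑ b : ZMod L, σ (((n : ZMod L), b), false) = 0 := by
        intro n
        induction n with
        | zero => simpa [hol₂] using h2
        | succ n ih => push_cast; rw [colstep]; exact ih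
      intro x
      have := colnat x.val
      rwa [ZMod.natCast_rightInverse x] at this
    -- the gauge potential
    set f : ZMod L × ZMod L → ZMod 2 := fun p =>
      (∑ k ∈ Finset.range p.1.val, σ ((((k : ℕ) : ZMod L), 0), true))
        + ∑ k ∈ Finset.range p.2.val, σ ((p.1, ((k : ℕ) : ZMod L)), false) with hf
    refine ⟨f, ?_⟩
    funext e
    obtain ⟨⟨x, y⟩, b⟩ := e
    cases b
    · -- vertical edge
      simp only [coboundary, Bool.false_eq_true, if_false, if_true, hf]
      have ps := partial_step hL (fun b => σ ((x, b), false)) (col x) y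
      have hh := CharTwo.add_self_eq_zero
        (∑ k ∈ Finset.range x.val, σ ((((k : ℕ) : ZMod L), 0), true))
      linear_combination ps + hh
    · -- horizontal edge
      simp only [coboundary, Bool.false_eq_true, if_false, if_true, hf]
      have psH := partial_step hL (fun a => σ ((a, 0), true)) (by simpa [hol₁] using h1) x
      -- vertical sums combine via flux
      have hcomb : (∑ k ∈ Finset.range y.val, σ ((x, ((k : ℕ) : ZMod L)), false))
          + (∑ k ∈ Finset.range y.val, σ ((x + 1, ((k : ℕ) : ZMod L)), false))
          = ∑ k ∈ Finset.range y.val,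
              (σ ((x, ((k : ℕ) : ZMod L)), true) + σ ((x, (((k+1 : ℕ)) : ZMod L)), true)) := by
        rw [← Finset.sum_add_distrib]
        refine Finset.sum_congr rfl fun k _ => ?_
        have hfl := hflux (x, ((k : ℕ) : ZMod L))
        simp only [plaqFlux] at hfl
        have hcast : (((k : ℕ) : ZMod L) + 1) = (((k + 1 : ℕ)) : ZMod L) := by push_cast; ring
        rw [hcast] at hfl
        have e1 := CharTwo.add_self_eq_zero (σ ((x, ((k : ℕ) : ZMod L)), true))
        have e2 := CharTwo.add_self_eq_zero (σ ((x, (((k + 1 : ℕ)) : ZMod L)), true))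
        linear_combination hfl - e1 - e2
      have tel := telescope2 (fun k => σ ((x, ((k : ℕ) : ZMod L)), true)) y.val
      have hvy : ((y.val : ℕ) : ZMod L) = y := ZMod.natCast_rightInverse y
      rw [hvy] at tel
      have e0 := CharTwo.add_self_eq_zero (σ ((x, ((0 : ℕ) : ZMod L)), true))
      have hc0 : ((0 : ℕ) : ZMod L) = 0 := by push_cast; ring
      rw [hc0] at e0 tel
      linear_combination psH + hcomb + tel + e0
end

section
/- Let L ≥ 1 and let D be the ℤ₂-coboundary map of the torus lattice (ZMod L)². Then the range of D is a subgroup of (ε → ZMod 2) of cardinality 2^{L²−1}, and the quotient group (ε → ZMod 2) / range(D) has cardinality 2^{L²+1}. In other words, there are exactly 2^{L²+1} gauge equivalence classes of ℤ₂-gauge-field configurations on the L×L torus. -/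
/-- The ℤ₂-coboundary map of the `L × L` torus lattice, as an additive group homomorphism
from vertex functions to edge configurations: vertices are `(ZMod L)²`, and an edge is a
pair `(i, b)` with `b = true` the horizontal edge from `i` to `i + (1,0)` and `b = false`
the vertical edge from `i` to `i + (0,1)`. -/
def coboundaryHom (L : ℕ) :
    (ZMod L × ZMod L → ZMod 2) →+ ((ZMod L × ZMod L) × Bool → ZMod 2) where
  toFun f := fun e =>
    if e.2 then f e.1 + f (e.1.1 + 1, e.1.2) else f e.1 + f (e.1.1, e.1.2 + 1)
  map_zero' := by funext e; cases e.2 <;> simp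
  map_add' f g := by
    funext e
    rcases e with ⟨v, b⟩
    cases b <;> simp <;> ring

lemma ker_const (L : ℕ) [NeZero L] (f : ZMod L × ZMod L → ZMod 2)
    (hf : coboundaryHom L f = 0) : ∀ v, f v = f (0, 0) := by
  have h1 : ∀ x y : ZMod L, f (x + 1, y) = f (x, y) := by
    intro x y
    have := congrFun hf ((x, y), true)
    simp [coboundaryHom] at this
    have h2 : f (x, y) + (f (x, y) + f (x + 1, y)) = f (x, y) + 0 := by rw [this]
    have h3 : f (x, y) = f (x + 1, y) := by
      simpa [← add_assoc, CharTwo.add_self_eq_zero] using h2.symm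
    exact h3.symm
  have h2 : ∀ x y : ZMod L, f (x, y + 1) = f (x, y) := by
    intro x y
    have := congrFun hf ((x, y), false)
    simp [coboundaryHom] at this
    have h2 : f (x, y) + (f (x, y) + f (x, y + 1)) = f (x, y) + 0 := by rw [this]
    have h3 : f (x, y) = f (x, y + 1) := by
      simpa [← add_assoc, CharTwo.add_self_eq_zero] using h2.symm
    exact h3.symm
  have hx : ∀ (n : ℕ) (y : ZMod L), f ((n : ZMod L), y) = f (0, y) := by
    intro n y
    induction n with
    | zero => simp
    | succ k ih => push_cast; rw [h1]; exact ih
  have hy : ∀ (n : ℕ), f (0, (n : ZMod L)) = f (0, 0) := by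
    intro n
    induction n with
    | zero => simp
    | succ k ih => push_cast; rw [h2]; exact ih
  rintro ⟨x, y⟩
  obtain ⟨m, rfl⟩ := ZMod.natCast_zmod_surjective (n := L) x
  obtain ⟨n, rfl⟩ := ZMod.natCast_zmod_surjective (n := L) y
  rw [hx, hy]

/-- The range of the ℤ₂-coboundary map of the `L × L` torus is a subgroup of order
`2^(L²−1)` of the configuration group, and the quotient by it has order `2^(L²+1)`:
there are exactly `2^(L²+1)` gauge equivalence classes of ℤ₂-gauge fields on the torus. -/
theorem card_range_and_quotient_coboundary (L : ℕ) (hL : 1 ≤ L) :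
    Nat.card (coboundaryHom L).range = 2 ^ (L ^ 2 - 1) ∧
    Nat.card (((ZMod L × ZMod L) × Bool → ZMod 2) ⧸ (coboundaryHom L).range) =
      2 ^ (L ^ 2 + 1) := by
  haveI : NeZero L := ⟨by omega⟩
  -- kernel has card 2
  have hker : Nat.card (coboundaryHom L).ker = 2 := by
    have e : (coboundaryHom L).ker ≃ ZMod 2 := by
      refine ⟨fun f => f.1 (0, 0), fun c => ⟨fun _ => c, ?_⟩, ?_, fun c => rfl⟩
      · ext e
        rcases e with ⟨v, b⟩
        cases b <;> simp [coboundaryHom, AddMonoidHom.mem_ker, CharTwo.add_self_eq_zero]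
      · rintro ⟨f, hf⟩
        ext v
        exact (ker_const L f hf v).symm
    rw [Nat.card_congr e]; simp [Nat.card_eq_fintype_card]
  have hdom : Nat.card (ZMod L × ZMod L → ZMod 2) = 2 ^ (L ^ 2) := by
    simp [Nat.card_eq_fintype_card, ZMod.card, sq]
  have hcod : Nat.card ((ZMod L × ZMod L) × Bool → ZMod 2) = 2 ^ (2 * L ^ 2) := by
    simp [Nat.card_eq_fintype_card, ZMod.card, sq]
    ring
  have hrange : Nat.card (coboundaryHom L).range = 2 ^ (L ^ 2 - 1) := by
    have h := AddSubgroup.card_eq_card_quotient_mul_card_addSubgroup (coboundaryHom L).ker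
    rw [Nat.card_congr (QuotientAddGroup.quotientKerEquivRange (coboundaryHom L)).toEquiv,
      hker, hdom] at h
    have hL2 : 1 ≤ L ^ 2 := Nat.one_le_pow _ _ (by omega)
    have : (2:ℕ) ^ L ^ 2 = 2 ^ (L ^ 2 - 1) * 2 := by
      rw [← pow_succ]; congr 1; omega
    omega
  refine ⟨hrange, ?_⟩
  have h := AddSubgroup.card_eq_card_quotient_mul_card_addSubgroup (coboundaryHom L).range
  rw [hcod, hrange] at h
  have hL2 : 1 ≤ L ^ 2 := Nat.one_le_pow _ _ (by omega)
  have he : (2:ℕ) ^ (2 * L ^ 2) = 2 ^ (L ^ 2 + 1) * 2 ^ (L ^ 2 - 1) := by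
    rw [← pow_add]; congr 1; omega
  have hp : 0 < (2:ℕ) ^ (L ^ 2 - 1) := Nat.pow_pos (by omega)
  rw [he] at h
  exact Nat.eq_of_mul_eq_mul_right hp h.symm
end

section
/- Let L ≥ 1 and let C : ε → ZMod 2 be a cycle on the torus lattice (ZMod L)², i.e. ∂ C = 0. Then the mod-2 intersection number of C with the straight vertical dual line through column j, namely w_j(C) := Σ_{b∈ZMod L} C((j, b), true) ∈ ZMod 2, is independent of j ∈ ZMod L. In other words, the mod-2 winding number of a cycle around the first direction of the torus is well defined, and a cycle crosses every vertical dual line the same number of times mod 2. -/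
/-- The ℤ₂-boundary map of the `L × L` torus lattice: vertices are `(ZMod L)²`, and an
edge is a pair `(i, b)` with `b = true` the horizontal edge from `i` to `i + (1,0)` and
`b = false` the vertical edge from `i` to `i + (0,1)`; `(boundary L C) v` is the mod-2
number of edges of `C` incident to the vertex `v`. -/
def boundary (L : ℕ) (C : (ZMod L × ZMod L) × Bool → ZMod 2) :
    ZMod L × ZMod L → ZMod 2 := fun v =>
  C (v, true) + C ((v.1 - 1, v.2), true) + C (v, false) + C ((v.1, v.2 - 1), false)

lemma winding_step (L : ℕ) [NeZero L]
    (C : (ZMod L × ZMod L) × Bool → ZMod 2) (hC : boundary L C = 0) (j : ZMod L) :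
    ∑ b : ZMod L, C ((j, b), true) = ∑ b : ZMod L, C ((j - 1, b), true) := by
  have h0 : ∑ b : ZMod L, boundary L C (j, b) = 0 := by
    simp [hC]
  simp only [boundary] at h0
  rw [Finset.sum_add_distrib, Finset.sum_add_distrib, Finset.sum_add_distrib] at h0
  have hvert : ∑ b : ZMod L, C ((j, b - 1), false) = ∑ b : ZMod L, C ((j, b), false) := by
    exact Fintype.sum_equiv (Equiv.subRight (1 : ZMod L)) _ _ (fun b => rfl)
  rw [hvert] at h0
  -- now: A + B + V + V = 0 with A = w_j, B = w_{j-1}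
  have : ∑ b : ZMod L, C ((j, b), true) + ∑ b : ZMod L, C ((j - 1, b), true) = 0 := by
    have h2 : ∀ x : ZMod 2, x + x = 0 := by decide
    have := h0
    rw [add_assoc, h2, add_zero] at this
    exact this
  have h2 : ∀ a b : ZMod 2, a + b = 0 → a = b := by decide
  exact h2 _ _ this

/-- The mod-2 winding number of a cycle around the first direction of the torus is well
defined: a cycle `C` (i.e. `∂C = 0`) crosses every straight vertical dual line the same
number of times mod 2, i.e. `Σ_b C((j,b), true)` is independent of the column `j`. -/
theorem winding_number_well_defined (L : ℕ) [NeZero L] (hL : 1 ≤ L)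
    (C : (ZMod L × ZMod L) × Bool → ZMod 2) (hC : boundary L C = 0) :
    ∀ j j' : ZMod L,
      ∑ b : ZMod L, C ((j, b), true) = ∑ b : ZMod L, C ((j', b), true) := by
  have key : ∀ (n : ℕ) (j : ZMod L),
      ∑ b : ZMod L, C ((j, b), true) = ∑ b : ZMod L, C ((j - n, b), true) := by
    intro n
    induction n with
    | zero => intro j; simp
    | succ n ih =>
      intro j
      rw [ih j, winding_step L C hC (j - n)]
      push_cast
      ring_nf
  intro j j'
  have hj : j - (j - j').val = j' := by
    rw [ZMod.natCast_val, ZMod.cast_id]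
    ring
  calc ∑ b : ZMod L, C ((j, b), true)
      = ∑ b : ZMod L, C ((j - ((j - j').val : ℕ), b), true) := key _ j
    _ = ∑ b : ZMod L, C ((j', b), true) := by rw [hj]
end
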